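/- arXiv:1105.5762 — 7 statements merged into one kernel-verified Lean document; each statement's English description precedes it below -/
import Mathlib

section
/- Let f be a probability density function on the real line such that (i) f is unimodal with mode t₀ (f increases on (-∞, t₀] and decreases on [t₀, ∞)), (ii) the left limit of f at t₀ is at most the right limit of f at t₀, and (iii) f is log-concave on (t₀, ∞). Then the survival function F̄(b) = ∫_b^∞ f(t) dt is log-concave on the real line. -/
open Real Set Filter MeasureTheory Topology

namespace SurvivalAux

noncomputable def G (f : ℝ → ℝ) (x : ℝ) : ℝ := ∫ t in Set.Ioi x, f t

noncomputable def fr (f : ℝ → ℝ) (x : ℝ) : ℝ := sSup (f '' Set.Ioi x)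

noncomputable def HH (f : ℝ → ℝ) (t₀ : ℝ) (u : ℝ) : ℝ :=
  if t₀ < u then -(fr f u / G f u) else 0

variable {f : ℝ → ℝ} {t₀ : ℝ}

lemma integrable_of_int_one (hint : ∫ t, f t = 1) : Integrable f := by
  by_contra h
  rw [MeasureTheory.integral_undef h] at hint
  norm_num at hint

lemma Gsplit (hf : Integrable f) {x y : ℝ} (h : x ≤ y) :
    G f x = (∫ t in Set.Ioc x y, f t) + G f y := by
  have hd : Disjoint (Set.Ioc x y) (Set.Ioi y) := by
    apply Set.disjoint_left.2
    rintro a ⟨_, h2⟩ h3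
    exact absurd (Set.mem_Ioi.1 h3) (not_lt.2 h2)
  rw [G, G, ← Set.Ioc_union_Ioi_eq_Ioi h,
    MeasureTheory.setIntegral_union hd measurableSet_Ioi hf.integrableOn hf.integrableOn]

lemma G_nonneg (hnn : ∀ t, 0 ≤ f t) (x : ℝ) : 0 ≤ G f x :=
  MeasureTheory.setIntegral_nonneg measurableSet_Ioi fun t _ => hnn t

lemma G_anti (hf : Integrable f) (hnn : ∀ t, 0 ≤ f t) : Antitone (G f) := by
  intro x y h
  rw [Gsplit hf h]
  have : 0 ≤ ∫ t in Set.Ioc x y, f t :=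
    MeasureTheory.setIntegral_nonneg measurableSet_Ioc fun t _ => hnn t
  linarith

lemma G_cont (hf : Integrable f) : Continuous (G f) := by
  have key : ∀ x : ℝ, G f 0 - ∫ t in (0:ℝ)..x, f t = G f x := by
    intro x
    rcases le_total (0:ℝ) x with h | h
    · rw [intervalIntegral.integral_of_le h]
      have := Gsplit hf h
      linarith
    · rw [intervalIntegral.integral_of_ge h]
      have := Gsplit hf h
      linarith
  exact (continuous_const.sub (hf.continuous_primitive 0)).congr key

lemma bddAbove_f (hdec : AntitoneOn f (Set.Ici t₀)) {x : ℝ} (hx : t₀ ≤ x) :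
    BddAbove (f '' Set.Ioi x) := by
  refine ⟨f t₀, ?_⟩
  rintro _ ⟨u, hu, rfl⟩
  exact hdec Set.self_mem_Ici (le_trans hx (le_of_lt hu)) (le_trans hx (le_of_lt hu))

lemma fr_tendsto (hdec : AntitoneOn f (Set.Ici t₀)) {x : ℝ} (hx : t₀ ≤ x) :
    Tendsto f (𝓝[>] x) (𝓝 (fr f x)) :=
  AntitoneOn.tendsto_nhdsGT
    (hdec.mono (fun u hu => le_trans hx (le_of_lt hu))) (bddAbove_f hdec hx)

lemma le_fr (hdec : AntitoneOn f (Set.Ici t₀)) {x u : ℝ} (hx : t₀ ≤ x) (hu : x < u) :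
    f u ≤ fr f x :=
  le_csSup (bddAbove_f hdec hx) ⟨u, hu, rfl⟩

lemma fr_nonneg (hnn : ∀ t, 0 ≤ f t) (hdec : AntitoneOn f (Set.Ici t₀)) {x : ℝ}
    (hx : t₀ ≤ x) : 0 ≤ fr f x :=
  le_trans (hnn (x+1)) (le_fr hdec hx (by linarith))

lemma setInt_const {x t : ℝ} (c : ℝ) (h : x ≤ t) :
    ∫ _u in Set.Ioc x t, c = (t - x) * c := by
  simp [Real.volume_Ioc, ENNReal.toReal_ofReal (sub_nonneg.2 h), smul_eq_mul, h]

lemma Ioi_diff_singleton (x : ℝ) : Set.Ioi x \ {x} = Set.Ioi x := by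
  apply Set.diff_singleton_eq_self
  simp

lemma G_deriv (hf : Integrable f) (hnn : ∀ t, 0 ≤ f t) (hdec : AntitoneOn f (Set.Ici t₀))
    {x : ℝ} (hx : t₀ ≤ x) :
    HasDerivWithinAt (G f) (-(fr f x)) (Set.Ioi x) x := by
  rw [hasDerivWithinAt_iff_tendsto_slope, Ioi_diff_singleton]
  apply tendsto_of_tendsto_of_tendsto_of_le_of_le' (g := fun _ => -(fr f x))
      (h := fun t => -(f t)) tendsto_const_nhds ((fr_tendsto hdec hx).neg)
  · filter_upwards [self_mem_nhdsWithin] with t (ht : x < t)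
    have h1 : G f x = (∫ u in Set.Ioc x t, f u) + G f t := Gsplit hf ht.le
    have h2 : (∫ u in Set.Ioc x t, f u) ≤ (t - x) * fr f x := by
      calc (∫ u in Set.Ioc x t, f u) ≤ ∫ _u in Set.Ioc x t, fr f x :=
            MeasureTheory.setIntegral_mono_on hf.integrableOn
              (integrableOn_const (by simp [Real.volume_Ioc]))
              measurableSet_Ioc (fun u hu => le_fr hdec hx hu.1)
        _ = (t - x) * fr f x := setInt_const _ ht.le
    rw [slope_def_field]
    rw [le_div_iff₀ (by linarith : (0:ℝ) < t - x)]
    nlinarith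
  · filter_upwards [self_mem_nhdsWithin] with t (ht : x < t)
    have h1 : G f x = (∫ u in Set.Ioc x t, f u) + G f t := Gsplit hf ht.le
    have h2 : (t - x) * f t ≤ ∫ u in Set.Ioc x t, f u := by
      calc (t - x) * f t = ∫ _u in Set.Ioc x t, f t := (setInt_const _ ht.le).symm
        _ ≤ ∫ u in Set.Ioc x t, f u :=
            MeasureTheory.setIntegral_mono_on
              (integrableOn_const (by simp [Real.volume_Ioc]))
              hf.integrableOn
              measurableSet_Ioc (fun u hu => hdec (le_trans hx (le_of_lt hu.1))
                (le_trans hx (le_trans (le_of_lt hu.1) hu.2)) hu.2)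
    rw [slope_def_field]
    rw [div_le_iff₀ (by linarith : (0:ℝ) < t - x)]
    nlinarith

lemma integral_Ioi_comp_add (f : ℝ → ℝ) (b d : ℝ) :
    (∫ u in Set.Ioi b, f (u + d)) = ∫ u in Set.Ioi (b + d), f u := by
  have h₁ : MeasurePreserving (fun x : ℝ => x + d) volume volume :=
    measurePreserving_add_right volume d
  have h₂ : MeasurableEmbedding (fun x : ℝ => x + d) :=
    (MeasurableEquiv.addRight d).measurableEmbedding
  have h3 := h₁.setIntegral_preimage_emb h₂ f (Set.Ioi (b + d))
  rw [← h3]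
  congr 1
  ext u
  simp

lemma four_pt (hnn : ∀ t, 0 ≤ f t)
    (hlc : ∀ x ∈ Set.Ioi t₀, ∀ y ∈ Set.Ioi t₀, ∀ l m : ℝ,
      0 ≤ l → 0 ≤ m → l + m = 1 → f x ^ l * f y ^ m ≤ f (l * x + m * y))
    {b c u : ℝ} (hb : t₀ < b) (hbc : b ≤ c) (hu : b < u) :
    f b * f (u + (c - b)) ≤ f c * f u := by
  rcases eq_or_lt_of_le hbc with rfl | hbc'
  · simp
  set d := c - b with hd
  have hd0 : 0 < d := sub_pos.2 hbc'
  have hT : 0 < u - b + d := by have := sub_pos.2 hu; linarith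
  set lam := d / (u - b + d) with hlamdef
  set mu := (u - b) / (u - b + d) with hmudef
  have hlam : 0 ≤ lam := by positivity
  have hmu : 0 ≤ mu := by
    have : 0 < u - b := sub_pos.2 hu
    positivity
  have hsum : lam + mu = 1 := by
    rw [hlamdef, hmudef]
    field_simp
    ring
  have hbmem : b ∈ Set.Ioi t₀ := hb
  have hudmem : u + d ∈ Set.Ioi t₀ := by
    simp only [Set.mem_Ioi]
    linarith
  have h1 := hlc b hbmem (u + d) hudmem mu lam hmu hlam (by linarith)
  have e1 : mu * b + lam * (u + d) = c := by
    rw [hmudef, hlamdef]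
    field_simp
    ring
  rw [e1] at h1
  have h2 := hlc b hbmem (u + d) hudmem lam mu hlam hmu hsum
  have e2 : lam * b + mu * (u + d) = u := by
    rw [hlamdef, hmudef]
    field_simp
    ring
  rw [e2] at h2
  have hprod := mul_le_mul h1 h2 (mul_nonneg (Real.rpow_nonneg (hnn b) _) (Real.rpow_nonneg (hnn _) _)) (hnn c)
  calc f b * f (u + d)
      = (f b ^ mu * f b ^ lam) * (f (u + d) ^ lam * f (u + d) ^ mu) := by
        rw [← Real.rpow_add' (hnn b) (by rw [add_comm] at hsum; rw [hsum]; norm_num),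
          ← Real.rpow_add' (hnn (u + d)) (by rw [hsum]; norm_num)]
        rw [add_comm mu lam, hsum, Real.rpow_one, Real.rpow_one]
    _ = (f b ^ mu * f (u + d) ^ lam) * (f b ^ lam * f (u + d) ^ mu) := by ring
    _ ≤ f c * f u := hprod

lemma hazard_pt (hf : Integrable f) (hnn : ∀ t, 0 ≤ f t)
    (hlc : ∀ x ∈ Set.Ioi t₀, ∀ y ∈ Set.Ioi t₀, ∀ l m : ℝ,
      0 ≤ l → 0 ≤ m → l + m = 1 → f x ^ l * f y ^ m ≤ f (l * x + m * y))
    {b c : ℝ} (hb : t₀ < b) (hbc : b ≤ c) :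
    f b * G f c ≤ f c * G f b := by
  have htrans : (∫ u in Set.Ioi b, f (u + (c - b))) = G f c := by
    rw [integral_Ioi_comp_add]
    norm_num [G]
  have hshift : Integrable (fun u => f (u + (c - b))) := hf.comp_add_right (c - b)
  have hmono : (∫ u in Set.Ioi b, f b * f (u + (c - b))) ≤ ∫ u in Set.Ioi b, f c * f u :=
    MeasureTheory.setIntegral_mono_on ((hshift.const_mul _).integrableOn)
      ((hf.const_mul _).integrableOn) measurableSet_Ioi
      (fun u hu => four_pt hnn hlc hb hbc hu)
  rwa [MeasureTheory.integral_const_mul, MeasureTheory.integral_const_mul, htrans] at hmono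

lemma hazard_fr (hf : Integrable f) (hnn : ∀ t, 0 ≤ f t) (hdec : AntitoneOn f (Set.Ici t₀))
    (hlc : ∀ x ∈ Set.Ioi t₀, ∀ y ∈ Set.Ioi t₀, ∀ l m : ℝ,
      0 ≤ l → 0 ≤ m → l + m = 1 → f x ^ l * f y ^ m ≤ f (l * x + m * y))
    {b c : ℝ} (hb : t₀ < b) (hbc : b ≤ c) :
    fr f b * G f c ≤ fr f c * G f b := by
  rcases eq_or_lt_of_le hbc with rfl | hbc'
  · exact le_rfl
  have hc : t₀ < c := lt_trans hb hbc'
  have step1 : ∀ b', b < b' → b' ≤ c → f b' * G f c ≤ fr f c * G f b' := by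
    intro b' h1 h2
    have hGb' : Tendsto (fun c' => f b' * G f c') (𝓝[>] c) (𝓝 (f b' * G f c)) :=
      tendsto_const_nhds.mul (((G_cont hf).tendsto c).mono_left nhdsWithin_le_nhds)
    have hRc : Tendsto (fun c' => f c' * G f b') (𝓝[>] c) (𝓝 (fr f c * G f b')) :=
      ((fr_tendsto hdec hc.le)).mul tendsto_const_nhds
    apply le_of_tendsto_of_tendsto hGb' hRc
    filter_upwards [self_mem_nhdsWithin] with c' (hc' : c < c')
    exact hazard_pt hf hnn hlc (lt_of_lt_of_le hb h1.le) (le_trans h2 hc'.le)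
  have hGb : Tendsto (fun b' => f b' * G f c) (𝓝[>] b) (𝓝 (fr f b * G f c)) :=
    (fr_tendsto hdec hb.le).mul tendsto_const_nhds
  have hRb : Tendsto (fun b' => fr f c * G f b') (𝓝[>] b) (𝓝 (fr f c * G f b)) :=
    tendsto_const_nhds.mul (((G_cont hf).tendsto b).mono_left nhdsWithin_le_nhds)
  apply le_of_tendsto_of_tendsto hGb hRb
  filter_upwards [Ioo_mem_nhdsGT hbc'] with b' hb'
  exact step1 b' hb'.1 hb'.2.le

section Hyps

variable (hf : Integrable f) (hnn : ∀ t, 0 ≤ f t) (hinc : MonotoneOn f (Set.Iic t₀))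
    (hdec : AntitoneOn f (Set.Ici t₀))
    (hlim : ∃ L R : ℝ,
      Filter.Tendsto f (nhdsWithin t₀ (Set.Iio t₀)) (nhds L) ∧
      Filter.Tendsto f (nhdsWithin t₀ (Set.Ioi t₀)) (nhds R) ∧ L ≤ R)
    (hlc : ∀ x ∈ Set.Ioi t₀, ∀ y ∈ Set.Ioi t₀, ∀ l m : ℝ,
      0 ≤ l → 0 ≤ m → l + m = 1 → f x ^ l * f y ^ m ≤ f (l * x + m * y))

include hnn hdec in
lemma HH_nonpos (u : ℝ) : HH f t₀ u ≤ 0 := by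
  unfold HH
  split
  · next h =>
    have := div_nonneg (fr_nonneg hnn hdec h.le) (G_nonneg hnn u)
    linarith
  · exact le_rfl

include hf hnn hdec hlc in
lemma HH_anti {c u v : ℝ} (hGc : 0 < G f c) (hu : t₀ ≤ u) (huv : u ≤ v) (hvc : v ≤ c) :
    HH f t₀ v ≤ HH f t₀ u := by
  by_cases ht : t₀ < u
  · have htv : t₀ < v := lt_of_lt_of_le ht huv
    have hGv : 0 < G f v := lt_of_lt_of_le hGc (G_anti hf hnn hvc)
    have hGu : 0 < G f u := lt_of_lt_of_le hGv (G_anti hf hnn huv)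
    rw [HH, HH, if_pos ht, if_pos htv, neg_le_neg_iff, div_le_div_iff₀ hGu hGv]
    exact hazard_fr hf hnn hdec hlc ht huv
  · have h0 : HH f t₀ u = 0 := by rw [HH, if_neg ht]
    rw [h0]
    exact HH_nonpos hnn hdec v

include hf hnn hdec hlc in
lemma log_G_ftc {b c : ℝ} (hb : t₀ ≤ b) (hbc : b ≤ c) (hGc : 0 < G f c) :
    ∫ u in b..c, HH f t₀ u = Real.log (G f c) - Real.log (G f b) := by
  apply intervalIntegral.integral_eq_sub_of_hasDeriv_right_of_le hbc
  · apply ContinuousOn.log (G_cont hf).continuousOn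
    intro x hx
    exact ne_of_gt (lt_of_lt_of_le hGc (G_anti hf hnn hx.2))
  · intro x hx
    have hx0 : t₀ < x := lt_of_le_of_lt hb hx.1
    have hGx : 0 < G f x := lt_of_lt_of_le hGc (G_anti hf hnn hx.2.le)
    have hd := (G_deriv hf hnn hdec hx0.le).log (ne_of_gt hGx)
    have : HH f t₀ x = -(fr f x) / G f x := by rw [HH, if_pos hx0, neg_div]
    rw [this]
    exact hd
  · apply AntitoneOn.intervalIntegrable
    rw [Set.uIcc_of_le hbc]
    intro u hu v hv huv
    exact HH_anti hf hnn hdec hlc hGc (le_trans hb hu.1) huv hv.2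

include hf hnn hdec hlc in
lemma LCright {x y l m : ℝ} (hx : t₀ ≤ x) (hxy : x ≤ y) (hl : 0 ≤ l) (hm : 0 ≤ m)
    (hlm : l + m = 1) : G f x ^ l * G f y ^ m ≤ G f (l * x + m * y) := by
  rcases eq_or_lt_of_le hl with rfl | hl0
  · have hm1 : m = 1 := by linarith
    subst hm1
    simp [Real.rpow_one]
  rcases eq_or_lt_of_le hm with rfl | hm0
  · have hl1 : l = 1 := by linarith
    subst hl1
    simp [Real.rpow_one]
  have hlsub : l = 1 - m := by linarith
  subst hlsub
  rcases eq_or_lt_of_le hxy with rfl | hxy0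
  · have hw : (1 - m) * x + m * x = x := by ring
    rw [hw]
    rcases eq_or_lt_of_le (G_nonneg hnn x) with hG0 | hGpos
    · rw [← hG0, Real.zero_rpow (ne_of_gt hl0), zero_mul]
    · rw [← Real.rpow_add hGpos, hlm, Real.rpow_one]
  rcases eq_or_lt_of_le (G_nonneg hnn y) with hGy0 | hGy
  · rw [← hGy0, Real.zero_rpow (ne_of_gt hm0), mul_zero]
    exact G_nonneg hnn _
  set w := (1 - m) * x + m * y with hw
  have hxw : x < w := by nlinarith [mul_pos hm0 (sub_pos.2 hxy0)]
  have hwy : w < y := by nlinarith [mul_pos hl0 (sub_pos.2 hxy0)]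
  have hGw : 0 < G f w := lt_of_lt_of_le hGy (G_anti hf hnn hwy.le)
  have hGx : 0 < G f x := lt_of_lt_of_le hGw (G_anti hf hnn hxw.le)
  have hw_t : t₀ < w := lt_of_le_of_lt hx hxw
  have ftc1 : ∫ u in x..w, HH f t₀ u = Real.log (G f w) - Real.log (G f x) :=
    log_G_ftc hf hnn hdec hlc hx hxw.le hGw
  have ftc2 : ∫ u in w..y, HH f t₀ u = Real.log (G f y) - Real.log (G f w) :=
    log_G_ftc hf hnn hdec hlc (le_trans hx hxw.le) hwy.le hGy
  have hii1 : IntervalIntegrable (HH f t₀) volume x w := by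
    apply AntitoneOn.intervalIntegrable
    rw [Set.uIcc_of_le hxw.le]
    intro u hu v hv huv
    exact HH_anti hf hnn hdec hlc hGw (le_trans hx hu.1) huv hv.2
  have hii2 : IntervalIntegrable (HH f t₀) volume w y := by
    apply AntitoneOn.intervalIntegrable
    rw [Set.uIcc_of_le hwy.le]
    intro u hu v hv huv
    exact HH_anti hf hnn hdec hlc hGy (le_trans hx (le_trans hxw.le hu.1)) huv hv.2
  have hb1 : (w - x) * HH f t₀ w ≤ ∫ u in x..w, HH f t₀ u := by
    have hmono := intervalIntegral.integral_mono_on hxw.le intervalIntegrable_const hii1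
      (fun u hu => HH_anti hf hnn hdec hlc hGw (le_trans hx hu.1) hu.2 le_rfl)
    simpa [intervalIntegral.integral_const, smul_eq_mul] using hmono
  have hb2 : ∫ u in w..y, HH f t₀ u ≤ (y - w) * HH f t₀ w := by
    have hmono := intervalIntegral.integral_mono_on hwy.le hii2 intervalIntegrable_const
      (fun u hu => HH_anti hf hnn hdec hlc hGy hw_t.le hu.1 hu.2)
    simpa [intervalIntegral.integral_const, smul_eq_mul] using hmono
  have key : (1 - m) * Real.log (G f x) + m * Real.log (G f y) ≤ Real.log (G f w) := by
    have p1 : (1 - m) * ((w - x) * HH f t₀ w) ≤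
        (1 - m) * (Real.log (G f w) - Real.log (G f x)) := by
      rw [← ftc1]; exact mul_le_mul_of_nonneg_left hb1 hl
    have p2 : m * (Real.log (G f y) - Real.log (G f w)) ≤ m * ((y - w) * HH f t₀ w) := by
      rw [← ftc2]; exact mul_le_mul_of_nonneg_left hb2 hm
    have q1 : ((1 - m) * m * (y - x)) * HH f t₀ w ≤
        (1 - m) * (Real.log (G f w) - Real.log (G f x)) := by
      have e1 : ((1 - m) * m * (y - x)) * HH f t₀ w
          = (1 - m) * ((w - x) * HH f t₀ w) := by rw [hw]; ring
      rw [e1]; exact p1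
    have q2 : m * (Real.log (G f y) - Real.log (G f w)) ≤
        ((1 - m) * m * (y - x)) * HH f t₀ w := by
      have e2 : ((1 - m) * m * (y - x)) * HH f t₀ w
          = m * ((y - w) * HH f t₀ w) := by rw [hw]; ring
      rw [e2]; exact p2
    linarith
  calc G f x ^ (1 - m) * G f y ^ m
      = Real.exp ((1 - m) * Real.log (G f x) + m * Real.log (G f y)) := by
        rw [Real.exp_add, Real.rpow_def_of_pos hGx, Real.rpow_def_of_pos hGy,
          mul_comm (Real.log (G f x)) (1 - m), mul_comm (Real.log (G f y)) m]
    _ ≤ Real.exp (Real.log (G f w)) := Real.exp_le_exp.2 key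
    _ = G f w := Real.exp_log hGw

include hf hnn hinc in
lemma concA {x y l m : ℝ} (hxy : x ≤ y) (hy : y ≤ t₀) (hl : 0 ≤ l) (hm : 0 ≤ m)
    (hlm : l + m = 1) : l * G f x + m * G f y ≤ G f (l * x + m * y) := by
  have hlsub : l = 1 - m := by linarith
  subst hlsub
  have hm1 : m ≤ 1 := by linarith
  set w := (1 - m) * x + m * y with hw
  have hxw : x ≤ w := by nlinarith [mul_nonneg hm (sub_nonneg.2 hxy)]
  have hwy : w ≤ y := by nlinarith [mul_nonneg hl (sub_nonneg.2 hxy)]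
  have h1 : G f x = (∫ t in Set.Ioc x w, f t) + G f w := Gsplit hf hxw
  have h2 : G f w = (∫ t in Set.Ioc w y, f t) + G f y := Gsplit hf hwy
  have hwt : w ≤ t₀ := le_trans hwy hy
  have b1 : (∫ t in Set.Ioc x w, f t) ≤ (w - x) * f w := by
    calc (∫ t in Set.Ioc x w, f t) ≤ ∫ _t in Set.Ioc x w, f w :=
          MeasureTheory.setIntegral_mono_on hf.integrableOn
            (integrableOn_const (by simp [Real.volume_Ioc]))
            measurableSet_Ioc
            (fun u hu => hinc (le_trans hu.2 hwt) hwt hu.2)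
      _ = (w - x) * f w := setInt_const _ hxw
  have b2 : (y - w) * f w ≤ ∫ t in Set.Ioc w y, f t := by
    calc (y - w) * f w = ∫ _t in Set.Ioc w y, f w := (setInt_const _ hwy).symm
      _ ≤ ∫ t in Set.Ioc w y, f t :=
          MeasureTheory.setIntegral_mono_on
            (integrableOn_const (by simp [Real.volume_Ioc]))
            hf.integrableOn measurableSet_Ioc
            (fun u hu => hinc hwt (le_trans hu.2 hy) hu.1.le)
  have p1 : (1 - m) * (∫ t in Set.Ioc x w, f t) ≤ (1 - m) * ((w - x) * f w) :=
    mul_le_mul_of_nonneg_left b1 hl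
  have p2 : m * ((y - w) * f w) ≤ m * (∫ t in Set.Ioc w y, f t) :=
    mul_le_mul_of_nonneg_left b2 hm
  have q1 : (1 - m) * (∫ t in Set.Ioc x w, f t) ≤ ((1 - m) * m * (y - x)) * f w := by
    have e1 : ((1 - m) * m * (y - x)) * f w = (1 - m) * ((w - x) * f w) := by rw [hw]; ring
    rw [e1]; exact p1
  have q2 : ((1 - m) * m * (y - x)) * f w ≤ m * (∫ t in Set.Ioc w y, f t) := by
    have e2 : ((1 - m) * m * (y - x)) * f w = m * ((y - w) * f w) := by rw [hw]; ring
    rw [e2]; exact p2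
  have h1' : (1 - m) * G f x
      = (1 - m) * (∫ t in Set.Ioc x w, f t) + (1 - m) * G f w := by rw [h1]; ring
  have h2' : m * G f w = m * (∫ t in Set.Ioc w y, f t) + m * G f y := by rw [h2]; ring
  linarith

include hf hnn hinc hdec hlim hlc in
lemma CEN {a c : ℝ} (ha : a < t₀) (hc : t₀ < c) (hGc : 0 < G f c) :
    (c - t₀) / (c - a) * Real.log (G f a) + (t₀ - a) / (c - a) * Real.log (G f c)
      ≤ Real.log (G f t₀) := by
  obtain ⟨L, R, hLt, hRt, hLR⟩ := hlim
  have hGt₀ : 0 < G f t₀ := lt_of_lt_of_le hGc (G_anti hf hnn hc.le)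
  have hGa : 0 < G f a := lt_of_lt_of_le hGt₀ (G_anti hf hnn ha.le)
  have hR : R = fr f t₀ := tendsto_nhds_unique hRt (fr_tendsto hdec le_rfl)
  have hL0 : 0 ≤ L := ge_of_tendsto hLt (Filter.Eventually.of_forall fun u => hnn u)
  have hfL : ∀ u, u < t₀ → f u ≤ L := by
    intro u hu
    apply ge_of_tendsto hLt
    filter_upwards [Ioo_mem_nhdsLT hu] with v hv
    exact hinc hu.le hv.2.le hv.1.le
  -- A1 : left log-slope bound
  have hIoc : G f a - G f t₀ = ∫ t in Set.Ioc a t₀, f t := by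
    have := Gsplit hf ha.le
    linarith
  have hbound : (∫ t in Set.Ioc a t₀, f t) ≤ (t₀ - a) * L := by
    rw [MeasureTheory.integral_Ioc_eq_integral_Ioo]
    calc (∫ t in Set.Ioo a t₀, f t) ≤ ∫ _t in Set.Ioo a t₀, L :=
          MeasureTheory.setIntegral_mono_on hf.integrableOn
            (integrableOn_const (by simp [Real.volume_Ioo]))
            measurableSet_Ioo (fun u hu => hfL u hu.2)
      _ = (t₀ - a) * L := by
          simp [Real.volume_Ioo, ENNReal.toReal_ofReal (sub_nonneg.2 ha.le), smul_eq_mul, ha.le]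
  have A1 : Real.log (G f a) - Real.log (G f t₀) ≤ (t₀ - a) * L / G f t₀ := by
    rw [← Real.log_div hGa.ne' hGt₀.ne']
    calc Real.log (G f a / G f t₀) ≤ G f a / G f t₀ - 1 :=
          Real.log_le_sub_one_of_pos (by positivity)
      _ = (G f a - G f t₀) / G f t₀ := by field_simp
      _ ≤ (t₀ - a) * L / G f t₀ := by
          refine (div_le_div_iff_of_pos_right hGt₀).2 ?_
          rw [hIoc]
          exact hbound
  -- A2 : right log-slope bound via right derivative of log ∘ G at t₀
  have hderiv : HasDerivWithinAt (fun u => Real.log (G f u)) (-(fr f t₀) / G f t₀)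
      (Set.Ioi t₀) t₀ := (G_deriv hf hnn hdec le_rfl).log hGt₀.ne'
  have hslope := hasDerivWithinAt_iff_tendsto_slope.1 hderiv
  rw [Ioi_diff_singleton] at hslope
  have A2' : (Real.log (G f c) - Real.log (G f t₀)) / (c - t₀) ≤ -(fr f t₀) / G f t₀ := by
    apply ge_of_tendsto hslope
    filter_upwards [Ioo_mem_nhdsGT hc] with t' ht'
    have hlam0 : (0:ℝ) ≤ (c - t') / (c - t₀) := by
      apply div_nonneg <;> linarith [ht'.1, ht'.2]
    have hmu0 : (0:ℝ) ≤ (t' - t₀) / (c - t₀) := by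
      apply div_nonneg <;> linarith [ht'.1, ht'.2]
    have hct : c - t₀ ≠ 0 := by linarith
    have hsum1 : (c - t') / (c - t₀) + (t' - t₀) / (c - t₀) = 1 := by
      field_simp
      ring
    have hl' := LCright hf hnn hdec hlc (x := t₀) (y := c) le_rfl hc.le hlam0 hmu0 hsum1
    have et' : (c - t') / (c - t₀) * t₀ + (t' - t₀) / (c - t₀) * c = t' := by
      field_simp
      ring
    rw [et'] at hl'
    have hGt' : 0 < G f t' := lt_of_lt_of_le hGc (G_anti hf hnn ht'.2.le)
    have hlog : (c - t') / (c - t₀) * Real.log (G f t₀)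
        + (t' - t₀) / (c - t₀) * Real.log (G f c) ≤ Real.log (G f t') := by
      have hpos1 : (0:ℝ) < G f t₀ ^ ((c - t') / (c - t₀)) :=
        Real.rpow_pos_of_pos hGt₀ _
      have hpos2 : (0:ℝ) < G f c ^ ((t' - t₀) / (c - t₀)) :=
        Real.rpow_pos_of_pos hGc _
      have := Real.log_le_log (by positivity) hl'
      rwa [Real.log_mul hpos1.ne' hpos2.ne', Real.log_rpow hGt₀, Real.log_rpow hGc] at this
    simp only [slope_def_field]
    rw [div_le_div_iff₀ (by linarith : (0:ℝ) < c - t₀)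
      (by linarith [ht'.1] : (0:ℝ) < t' - t₀)]
    -- (log Gc - log Gt₀) * (t' - t₀) ≤ (log Gt' - log Gt₀) * (c - t₀)
    have expand : ((c - t') / (c - t₀)) * (c - t₀) = c - t' := by field_simp
    have expand2 : ((t' - t₀) / (c - t₀)) * (c - t₀) = t' - t₀ := by field_simp
    have hmul : ((c - t') / (c - t₀) * Real.log (G f t₀)
        + (t' - t₀) / (c - t₀) * Real.log (G f c)) * (c - t₀) ≤
          Real.log (G f t') * (c - t₀) :=
      mul_le_mul_of_nonneg_right hlog (by linarith)
    have hexp : ((c - t') / (c - t₀) * Real.log (G f t₀)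
        + (t' - t₀) / (c - t₀) * Real.log (G f c)) * (c - t₀)
        = (c - t') * Real.log (G f t₀) + (t' - t₀) * Real.log (G f c) := by
      field_simp
    rw [hexp] at hmul
    nlinarith [hmul]
  have A2 : Real.log (G f c) - Real.log (G f t₀) ≤ -((c - t₀) * L / G f t₀) := by
    have h1 := (div_le_iff₀ (by linarith : (0:ℝ) < c - t₀)).1 A2'
    have hfr : L ≤ fr f t₀ := hR ▸ hLR
    have h2 : -(fr f t₀) / G f t₀ * (c - t₀) ≤ -((c - t₀) * L / G f t₀) := by
      rw [div_mul_eq_mul_div, ← neg_div]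
      apply (div_le_div_iff_of_pos_right hGt₀).2
      nlinarith [mul_nonneg (sub_nonneg.2 hfr) (by linarith : (0:ℝ) ≤ c - t₀)]
    linarith
  -- combine
  have hca : (0:ℝ) < c - a := by linarith
  have hα : (0:ℝ) ≤ (c - t₀) / (c - a) := by apply div_nonneg <;> linarith
  have hβ : (0:ℝ) ≤ (t₀ - a) / (c - a) := by apply div_nonneg <;> linarith
  have hsumαβ : (c - t₀) / (c - a) + (t₀ - a) / (c - a) = 1 := by field_simp; ring
  have p1 : (c - t₀) / (c - a) * (Real.log (G f a) - Real.log (G f t₀))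
      ≤ (c - t₀) / (c - a) * ((t₀ - a) * L / G f t₀) := mul_le_mul_of_nonneg_left A1 hα
  have p2 : (t₀ - a) / (c - a) * (Real.log (G f c) - Real.log (G f t₀))
      ≤ (t₀ - a) / (c - a) * (-((c - t₀) * L / G f t₀)) := mul_le_mul_of_nonneg_left A2 hβ
  have ecancel : (c - t₀) / (c - a) * ((t₀ - a) * L / G f t₀)
      + (t₀ - a) / (c - a) * (-((c - t₀) * L / G f t₀)) = 0 := by
    field_simp
    ring
  have esum : (c - t₀) / (c - a) * Real.log (G f t₀)
      + (t₀ - a) / (c - a) * Real.log (G f t₀) = Real.log (G f t₀) := by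
    rw [← add_mul, hsumαβ, one_mul]
  nlinarith [p1, p2]

include hf hnn hinc hdec hlim hlc in
lemma key {x y l m : ℝ} (hxy : x ≤ y) (hl : 0 ≤ l) (hm : 0 ≤ m) (hlm : l + m = 1) :
    G f x ^ l * G f y ^ m ≤ G f (l * x + m * y) := by
  rcases eq_or_lt_of_le hl with rfl | hl0
  · have hm1 : m = 1 := by linarith
    subst hm1
    simp
  rcases eq_or_lt_of_le hm with rfl | hm0
  · have hl1 : l = 1 := by linarith
    subst hl1
    simp
  rcases eq_or_lt_of_le hxy with rfl | hxy0
  · have hwx : l * x + m * x = x := by rw [← add_mul, hlm, one_mul]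
    rw [hwx]
    rcases eq_or_lt_of_le (G_nonneg hnn x) with hG0 | hGpos
    · rw [← hG0, Real.zero_rpow (ne_of_gt hl0), zero_mul]
    · rw [← Real.rpow_add hGpos, hlm, Real.rpow_one]
  rcases eq_or_lt_of_le (G_nonneg hnn y) with hGy0 | hGy
  · rw [← hGy0, Real.zero_rpow (ne_of_gt hm0), mul_zero]
    exact G_nonneg hnn _
  rcases le_or_gt t₀ x with hcase1 | hx_lt
  · exact LCright hf hnn hdec hlc hcase1 hxy hl hm hlm
  rcases le_or_gt y t₀ with hcase2 | hy_gt
  · have harith := concA hf hnn hinc hxy0.le hcase2 hl hm hlm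
    have hgm := Real.geom_mean_le_arith_mean2_weighted hl hm
      (G_nonneg hnn x) (G_nonneg hnn y) hlm
    linarith
  -- mixed case : x < t₀ < y
  set w := l * x + m * y with hw
  have hwx_id : w - x = m * (y - x) := by
    have hl' : l = 1 - m := by linarith
    rw [hw, hl']
    ring
  have hyw_id : y - w = l * (y - x) := by
    have hm' : m = 1 - l := by linarith
    rw [hw, hm']
    ring
  have hxw : x < w := by nlinarith [hwx_id, mul_pos hm0 (sub_pos.2 hxy0)]
  have hwy : w < y := by nlinarith [hyw_id, mul_pos hl0 (sub_pos.2 hxy0)]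
  have hGw : 0 < G f w := lt_of_lt_of_le hGy (G_anti hf hnn hwy.le)
  have hGx : 0 < G f x := lt_of_lt_of_le hGw (G_anti hf hnn hxw.le)
  have hGt₀ : 0 < G f t₀ := lt_of_lt_of_le hGy (G_anti hf hnn hy_gt.le)
  have hcen := CEN hf hnn hinc hdec hlim hlc hx_lt hy_gt hGy
  have hyx : (0:ℝ) < y - x := by linarith
  set α := (y - t₀) / (y - x) with hαdef
  set β := (t₀ - x) / (y - x) with hβdef
  have hα : 0 ≤ α := div_nonneg (by linarith) (by linarith)
  have hβ : 0 ≤ β := div_nonneg (by linarith) (by linarith)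
  have hyx' : y - x ≠ 0 := ne_of_gt hyx
  have hαβ : α + β = 1 := by
    rw [hαdef, hβdef, ← add_div,
      (by ring : y - t₀ + (t₀ - x) = y - x), div_self hyx']
  suffices hlog : l * Real.log (G f x) + m * Real.log (G f y) ≤ Real.log (G f w) by
    calc G f x ^ l * G f y ^ m
        = Real.exp (l * Real.log (G f x) + m * Real.log (G f y)) := by
          rw [Real.exp_add, Real.rpow_def_of_pos hGx, Real.rpow_def_of_pos hGy,
            mul_comm (Real.log (G f x)) l, mul_comm (Real.log (G f y)) m]
      _ ≤ Real.exp (Real.log (G f w)) := Real.exp_le_exp.2 hlog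
      _ = G f w := Real.exp_log hGw
  have hwx_id : w - x = m * (y - x) := by
    have hl' : l = 1 - m := by linarith
    rw [hw, hl']
    ring
  have hyw_id : y - w = l * (y - x) := by
    have hm' : m = 1 - l := by linarith
    rw [hw, hm']
    ring
  rcases le_or_gt w t₀ with hwt | htw
  · -- w ≤ t₀ : use concavity of G on the left of t₀
    have ht₀x : (0:ℝ) < t₀ - x := by linarith
    have ht₀x' : t₀ - x ≠ 0 := ne_of_gt ht₀x
    set γ := (t₀ - w) / (t₀ - x) with hγdef
    set δ := (w - x) / (t₀ - x) with hδdef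
    have hγ : 0 ≤ γ := div_nonneg (by linarith) (by linarith)
    have hδ : 0 ≤ δ := div_nonneg (by linarith) (by linarith)
    have hγδ : γ + δ = 1 := by
      rw [hγdef, hδdef, ← add_div,
        (by ring : t₀ - w + (w - x) = t₀ - x), div_self ht₀x']
    have hconc := concA hf hnn hinc hx_lt.le le_rfl hγ hδ hγδ
    have ew : γ * x + δ * t₀ = w := by
      rw [hγdef, hδdef]
      field_simp
      ring
    rw [ew] at hconc
    have hgm := Real.geom_mean_le_arith_mean2_weighted hγ hδ
      (G_nonneg hnn x) (G_nonneg hnn t₀) hγδ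
    have hlog1 : γ * Real.log (G f x) + δ * Real.log (G f t₀) ≤ Real.log (G f w) := by
      have hpos : (0:ℝ) < G f x ^ γ * G f t₀ ^ δ := by
        have := Real.rpow_pos_of_pos hGx γ
        have := Real.rpow_pos_of_pos hGt₀ δ
        positivity
      have hle := Real.log_le_log hpos (le_trans hgm hconc)
      rwa [Real.log_mul (Real.rpow_pos_of_pos hGx γ).ne' (Real.rpow_pos_of_pos hGt₀ δ).ne',
        Real.log_rpow hGx, Real.log_rpow hGt₀] at hle
    have hstep : δ * (α * Real.log (G f x) + β * Real.log (G f y))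
        ≤ δ * Real.log (G f t₀) := mul_le_mul_of_nonneg_left hcen hδ
    have eδβ : δ * β = m := by
      have h1 : δ * β = (w - x) / (y - x) := by
        rw [hδdef, hβdef]
        field_simp
      rw [h1, hwx_id, mul_div_assoc, div_self hyx', mul_one]
    have hδsplit : δ * α + δ * β = δ := by rw [← mul_add, hαβ, mul_one]
    have eγδα : γ + δ * α = l := by linarith
    calc l * Real.log (G f x) + m * Real.log (G f y)
        = (γ + δ * α) * Real.log (G f x) + (δ * β) * Real.log (G f y) := by
          rw [eγδα, eδβ]
      _ = γ * Real.log (G f x) + δ * (α * Real.log (G f x) + β * Real.log (G f y)) := by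
          ring
      _ ≤ γ * Real.log (G f x) + δ * Real.log (G f t₀) := by linarith [hstep]
      _ ≤ Real.log (G f w) := hlog1
  · -- t₀ < w : use log-concavity of G on the right of t₀
    have hyt : (0:ℝ) < y - t₀ := by linarith
    have hyt' : y - t₀ ≠ 0 := ne_of_gt hyt
    set γ := (y - w) / (y - t₀) with hγdef
    set δ := (w - t₀) / (y - t₀) with hδdef
    have hγ : 0 ≤ γ := div_nonneg (by linarith) (by linarith)
    have hδ : 0 ≤ δ := div_nonneg (by linarith) (by linarith)
    have hγδ : γ + δ = 1 := by
      rw [hγdef, hδdef, ← add_div,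
        (by ring : y - w + (w - t₀) = y - t₀), div_self hyt']
    have hlcr := LCright hf hnn hdec hlc (le_refl t₀) hy_gt.le hγ hδ hγδ
    have ew : γ * t₀ + δ * y = w := by
      rw [hγdef, hδdef]
      field_simp
      ring
    rw [ew] at hlcr
    have hlog1 : γ * Real.log (G f t₀) + δ * Real.log (G f y) ≤ Real.log (G f w) := by
      have hpos : (0:ℝ) < G f t₀ ^ γ * G f y ^ δ := by
        have := Real.rpow_pos_of_pos hGt₀ γ
        have := Real.rpow_pos_of_pos hGy δ
        positivity
      have hle := Real.log_le_log hpos hlcr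
      rwa [Real.log_mul (Real.rpow_pos_of_pos hGt₀ γ).ne' (Real.rpow_pos_of_pos hGy δ).ne',
        Real.log_rpow hGt₀, Real.log_rpow hGy] at hle
    have hstep : γ * (α * Real.log (G f x) + β * Real.log (G f y))
        ≤ γ * Real.log (G f t₀) := mul_le_mul_of_nonneg_left hcen hγ
    have eγα : γ * α = l := by
      have h1 : γ * α = (y - w) / (y - x) := by
        rw [hγdef, hαdef]
        field_simp
      rw [h1, hyw_id, mul_div_assoc, div_self hyx', mul_one]
    have hγsplit : γ * α + γ * β = γ := by rw [← mul_add, hαβ, mul_one]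
    have eγβδ : γ * β + δ = m := by linarith
    calc l * Real.log (G f x) + m * Real.log (G f y)
        = (γ * α) * Real.log (G f x) + (γ * β + δ) * Real.log (G f y) := by
          rw [eγα, eγβδ]
      _ = γ * (α * Real.log (G f x) + β * Real.log (G f y)) + δ * Real.log (G f y) := by
          ring
      _ ≤ γ * Real.log (G f t₀) + δ * Real.log (G f y) := by linarith [hstep]
      _ ≤ Real.log (G f w) := hlog1

include hf hnn hinc hdec hlim hlc in
lemma key' (x y l m : ℝ) (hl : 0 ≤ l) (hm : 0 ≤ m) (hlm : l + m = 1) :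
    G f x ^ l * G f y ^ m ≤ G f (l * x + m * y) := by
  rcases le_total x y with hxy | hxy
  · exact key hf hnn hinc hdec hlim hlc hxy hl hm hlm
  · have h := key hf hnn hinc hdec hlim hlc hxy hm hl (by linarith)
    rw [(by ring : m * y + l * x = l * x + m * y)] at h
    rw [mul_comm]
    exact h

end Hyps

end SurvivalAux

/-- If a probability density `f` on ℝ is unimodal with mode `t₀`,
its left limit at `t₀` is at most its right limit, and it is log-concave on the
declining phase `(t₀, ∞)`, then the survival function `b ↦ ∫_b^∞ f` is
log-concave on ℝ. -/
theorem survival_logConcave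
    (f : ℝ → ℝ) (t₀ : ℝ)
    (hmeas : Measurable f) (hnn : ∀ t, 0 ≤ f t)
    (hint : ∫ t, f t = 1)
    (hinc : MonotoneOn f (Set.Iic t₀))
    (hdec : AntitoneOn f (Set.Ici t₀))
    (hlim : ∃ L R : ℝ,
      Filter.Tendsto f (nhdsWithin t₀ (Set.Iio t₀)) (nhds L) ∧
      Filter.Tendsto f (nhdsWithin t₀ (Set.Ioi t₀)) (nhds R) ∧ L ≤ R)
    (hlc : ∀ x ∈ Set.Ioi t₀, ∀ y ∈ Set.Ioi t₀, ∀ l m : ℝ,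
      0 ≤ l → 0 ≤ m → l + m = 1 → f x ^ l * f y ^ m ≤ f (l * x + m * y)) :
    ∀ x y l m : ℝ, 0 ≤ l → 0 ≤ m → l + m = 1 →
      (∫ t in Set.Ioi x, f t) ^ l * (∫ t in Set.Ioi y, f t) ^ m ≤
        ∫ t in Set.Ioi (l * x + m * y), f t := by
  have hf : MeasureTheory.Integrable f := SurvivalAux.integrable_of_int_one hint
  intro x y l m hl hm hlm
  exact SurvivalAux.key' hf hnn hinc hdec hlim hlc x y l m hl hm hlm
end

section
/- For ν > 1/2, the ratio r_ν(t)/t = I_ν(t)/(t · I_{ν-1}(t)) is decreasing in t on (0, ∞), where I_ν is the modified Bessel function of the first kind. -/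
open Real Set Filter MeasureTheory

/-- Modified Bessel function of the first kind, `I_ν(t) = Σ_k (t/2)^(2k+ν)/(k! Γ(ν+k+1))`. -/
noncomputable def besselI (ν t : ℝ) : ℝ :=
  ∑' k : ℕ, (t / 2) ^ (ν + 2 * (k : ℝ)) / ((Nat.factorial k : ℝ) * Real.Gamma (ν + (k : ℝ) + 1))

/-- The ratio `r_ν(t) = I_ν(t)/I_{ν-1}(t)`. -/
noncomputable def besselRatio (ν t : ℝ) : ℝ := besselI ν t / besselI (ν - 1) t

/-- Coefficients of the auxiliary power series. -/
noncomputable def bCoef (μ : ℝ) (k : ℕ) : ℝ :=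
  1 / ((Nat.factorial k : ℝ) * Real.Gamma (μ + (k : ℝ) + 1))

/-- The auxiliary power series `F_μ(x) = Σ_k x^k/(k! Γ(μ+k+1))`. -/
noncomputable def bSum (μ x : ℝ) : ℝ := ∑' k : ℕ, bCoef μ k * x ^ k

lemma bCoef_pos {μ : ℝ} (hμ : -(1/2 : ℝ) < μ) (k : ℕ) : 0 < bCoef μ k := by
  have h1 : (0:ℝ) < μ + (k:ℝ) + 1 := by
    have : (0:ℝ) ≤ (k:ℝ) := Nat.cast_nonneg k
    linarith
  have := Real.Gamma_pos_of_pos h1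
  have hf : (0:ℝ) < (Nat.factorial k : ℝ) := by positivity
  unfold bCoef; positivity

lemma gamma_aux {μ : ℝ} (hμ : -(1/2 : ℝ) < μ) (k : ℕ) :
    Real.Gamma (μ + 2) ≤ Real.Gamma (μ + (k:ℝ) + 2) := by
  induction k with
  | zero => simp
  | succ n ih =>
    have hpos : (0:ℝ) < μ + (n:ℝ) + 2 := by
      have : (0:ℝ) ≤ (n:ℝ) := Nat.cast_nonneg n
      linarith
    have heq : μ + ((n:ℝ)+1) + 2 = (μ + (n:ℝ) + 2) + 1 := by ring
    have : Real.Gamma (μ + ((n:ℕ):ℝ) + 2 + 1) = (μ + (n:ℝ) + 2) * Real.Gamma (μ + (n:ℝ) + 2) :=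
      Real.Gamma_add_one (ne_of_gt hpos)
    have h1 : (1:ℝ) ≤ μ + (n:ℝ) + 2 := by
      have : (0:ℝ) ≤ (n:ℝ) := Nat.cast_nonneg n
      linarith
    have hGpos : 0 < Real.Gamma (μ + (n:ℝ) + 2) := Real.Gamma_pos_of_pos hpos
    calc Real.Gamma (μ + 2) ≤ Real.Gamma (μ + (n:ℝ) + 2) := ih
      _ ≤ (μ + (n:ℝ) + 2) * Real.Gamma (μ + (n:ℝ) + 2) := le_mul_of_one_le_left hGpos.le h1
      _ = Real.Gamma (μ + ((n:ℕ):ℝ) + 2 + 1) := this.symm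
      _ = Real.Gamma (μ + (((n+1):ℕ):ℝ) + 2) := by push_cast; ring_nf

lemma gamma_lb {μ : ℝ} (hμ : -(1/2 : ℝ) < μ) (k : ℕ) :
    min (Real.Gamma (μ + 1)) (Real.Gamma (μ + 2)) ≤ Real.Gamma (μ + (k:ℝ) + 1) := by
  cases k with
  | zero => simpa using min_le_left _ _
  | succ n =>
    have h := gamma_aux hμ n
    have heq : μ + (((n+1):ℕ):ℝ) + 1 = μ + (n:ℝ) + 2 := by push_cast; ring
    rw [heq]
    exact le_trans (min_le_right _ _) h

lemma bSummable {μ : ℝ} (hμ : -(1/2 : ℝ) < μ) {x : ℝ} (hx : 0 ≤ x) :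
    Summable (fun k : ℕ => bCoef μ k * x ^ k) := by
  set m := min (Real.Gamma (μ + 1)) (Real.Gamma (μ + 2)) with hm
  have hm0 : 0 < m := by
    apply lt_min
    · exact Real.Gamma_pos_of_pos (by linarith)
    · exact Real.Gamma_pos_of_pos (by linarith)
  apply Summable.of_nonneg_of_le
    (fun k => by have := bCoef_pos hμ k; positivity)
    (fun k => ?_)
    (((Real.summable_pow_div_factorial x).mul_left (1/m)))
  have hG : m ≤ Real.Gamma (μ + (k:ℝ) + 1) := gamma_lb hμ k
  have hf : (0:ℝ) < (Nat.factorial k : ℝ) := by positivity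
  have hcoef : bCoef μ k ≤ 1 / ((Nat.factorial k : ℝ) * m) := by
    unfold bCoef
    apply one_div_le_one_div_of_le (by positivity)
    exact mul_le_mul_of_nonneg_left hG hf.le
  calc bCoef μ k * x ^ k ≤ (1 / ((Nat.factorial k : ℝ) * m)) * x ^ k := by
        exact mul_le_mul_of_nonneg_right hcoef (by positivity)
    _ = 1/m * (x ^ k / (Nat.factorial k : ℝ)) := by rw [one_div, one_div, mul_inv]; ring

lemma bSum_pos {μ : ℝ} (hμ : -(1/2 : ℝ) < μ) {x : ℝ} (hx : 0 ≤ x) : 0 < bSum μ x := by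
  refine Summable.tsum_pos (bSummable hμ hx) (fun k => ?_) 0 ?_
  · have := bCoef_pos hμ k; positivity
  · simpa using bCoef_pos hμ 0

/-- Key coefficient inequality: the ratio `bCoef ν k / bCoef (ν-1) k = 1/(ν+k)` is decreasing. -/
lemma coef_ineq {ν : ℝ} (hν : 1/2 < ν) {j k : ℕ} (hjk : j ≤ k) :
    bCoef ν k * bCoef (ν-1) j ≤ bCoef ν j * bCoef (ν-1) k := by
  have hj : (0:ℝ) < ν + j := by have : (0:ℝ) ≤ (j:ℝ) := Nat.cast_nonneg j; linarith
  have hk : (0:ℝ) < ν + k := by have : (0:ℝ) ≤ (k:ℝ) := Nat.cast_nonneg k; linarith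
  have hGj : 0 < Real.Gamma (ν + j) := Real.Gamma_pos_of_pos hj
  have hGk : 0 < Real.Gamma (ν + k) := Real.Gamma_pos_of_pos hk
  have hfj : (0:ℝ) < (Nat.factorial j : ℝ) := by positivity
  have hfk : (0:ℝ) < (Nat.factorial k : ℝ) := by positivity
  have hAj : Real.Gamma (ν + (j:ℝ) + 1) = (ν + j) * Real.Gamma (ν + j) :=
    Real.Gamma_add_one (ne_of_gt hj)
  have hAk : Real.Gamma (ν + (k:ℝ) + 1) = (ν + k) * Real.Gamma (ν + k) :=
    Real.Gamma_add_one (ne_of_gt hk)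
  have hBj : ν - 1 + (j:ℝ) + 1 = ν + j := by ring
  have hBk : ν - 1 + (k:ℝ) + 1 = ν + k := by ring
  unfold bCoef
  rw [hBj, hBk, hAj, hAk]
  rw [div_mul_div_comm, div_mul_div_comm, div_le_div_iff₀ (by positivity) (by positivity)]
  have hjk' : (j:ℝ) ≤ (k:ℝ) := Nat.cast_le.mpr hjk
  have hP : (0:ℝ) < (j.factorial : ℝ) * Real.Gamma (ν + j) * ((k.factorial : ℝ) * Real.Gamma (ν + k)) := by positivity
  calc 1 * 1 * ((j.factorial:ℝ) * ((ν + ↑j) * Real.Gamma (ν + ↑j)) * ((k.factorial:ℝ) * Real.Gamma (ν + ↑k)))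
      = ((j.factorial:ℝ) * Real.Gamma (ν + j) * ((k.factorial:ℝ) * Real.Gamma (ν + k))) * (ν + ↑j) := by ring
    _ ≤ ((j.factorial:ℝ) * Real.Gamma (ν + j) * ((k.factorial:ℝ) * Real.Gamma (ν + k))) * (ν + ↑k) := by
        exact mul_le_mul_of_nonneg_left (by linarith) hP.le
    _ = 1 * 1 * ((k.factorial:ℝ) * ((ν + ↑k) * Real.Gamma (ν + ↑k)) * ((j.factorial:ℝ) * Real.Gamma (ν + ↑j))) := by ring

set_option maxHeartbeats 1000000 in
/-- Cross inequality for the power series. -/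
lemma cross_ineq {ν : ℝ} (hν : 1/2 < ν) {u v : ℝ} (hu : 0 ≤ u) (huv : u ≤ v) :
    bSum ν v * bSum (ν-1) u ≤ bSum ν u * bSum (ν-1) v := by
  have hν' : -(1/2 : ℝ) < ν := by linarith
  have hν1 : -(1/2 : ℝ) < ν - 1 := by linarith
  have hv : 0 ≤ v := le_trans hu huv
  have Sfu := bSummable hν' hu
  have Sfv := bSummable hν' hv
  have Sgu := bSummable hν1 hu
  have Sgv := bSummable hν1 hv
  have nnf : ∀ (x : ℝ) (_ : 0 ≤ x) (μ : ℝ) (hμ : -(1/2:ℝ) < μ) (k : ℕ),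
      0 ≤ bCoef μ k * x ^ k := fun x hx μ hμ k => by
    have := bCoef_pos hμ k; positivity
  -- product representations
  have hp1 : bSum ν v * bSum (ν-1) u
      = ∑' p : ℕ × ℕ, (bCoef ν p.1 * v ^ p.1) * (bCoef (ν-1) p.2 * u ^ p.2) := by
    apply tsum_mul_tsum_of_summable_norm
    · simpa only [Real.norm_eq_abs] using Sfv.abs
    · simpa only [Real.norm_eq_abs] using Sgu.abs
  have hp2 : bSum ν u * bSum (ν-1) v
      = ∑' p : ℕ × ℕ, (bCoef ν p.1 * u ^ p.1) * (bCoef (ν-1) p.2 * v ^ p.2) := by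
    apply tsum_mul_tsum_of_summable_norm
    · simpa only [Real.norm_eq_abs] using Sfu.abs
    · simpa only [Real.norm_eq_abs] using Sgv.abs
  set c : ℕ × ℕ → ℝ :=
    fun p => bCoef ν p.1 * bCoef (ν-1) p.2 * (v ^ p.1 * u ^ p.2 - u ^ p.1 * v ^ p.2) with hc
  have S1 : Summable (fun p : ℕ × ℕ => (bCoef ν p.1 * v ^ p.1) * (bCoef (ν-1) p.2 * u ^ p.2)) :=
    Sfv.mul_of_nonneg Sgu (fun k => nnf v hv ν hν' k) (fun k => nnf u hu (ν-1) hν1 k)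
  have S2 : Summable (fun p : ℕ × ℕ => (bCoef ν p.1 * u ^ p.1) * (bCoef (ν-1) p.2 * v ^ p.2)) :=
    Sfu.mul_of_nonneg Sgv (fun k => nnf u hu ν hν' k) (fun k => nnf v hv (ν-1) hν1 k)
  have hcS : Summable c := by
    have : c = fun p : ℕ × ℕ => (bCoef ν p.1 * v ^ p.1) * (bCoef (ν-1) p.2 * u ^ p.2)
        - (bCoef ν p.1 * u ^ p.1) * (bCoef (ν-1) p.2 * v ^ p.2) := by
      funext p; simp only [hc]; ring
    rw [this]; exact S1.sub S2
  have htsum : ∑' p, c p = bSum ν v * bSum (ν-1) u - bSum ν u * bSum (ν-1) v := by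
    rw [hp1, hp2, ← Summable.tsum_sub S1 S2]
    apply tsum_congr; intro p; simp only [hc]; ring
  -- swap symmetrization
  have hswap : ∑' p, c p = ∑' p : ℕ × ℕ, c (p.2, p.1) := by
    exact ((Equiv.prodComm ℕ ℕ).tsum_eq c).symm
  have hkey : ∀ p : ℕ × ℕ, c p + c (p.2, p.1) ≤ 0 := by
    rintro ⟨j, k⟩
    simp only [hc]
    have hterm : ∀ j k : ℕ, j ≤ k →
        bCoef ν j * bCoef (ν-1) k * (v ^ j * u ^ k - u ^ j * v ^ k)
        + bCoef ν k * bCoef (ν-1) j * (v ^ k * u ^ j - u ^ k * v ^ j) ≤ 0 := by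
      intro j k hjk
      have hcc := coef_ineq hν hjk
      have hpow : v ^ j * u ^ k ≤ u ^ j * v ^ k := by
        have h1 : u ^ k = u ^ j * u ^ (k - j) := by rw [← pow_add]; congr 1; omega
        have h2 : v ^ k = v ^ j * v ^ (k - j) := by rw [← pow_add]; congr 1; omega
        rw [h1, h2]
        have : u ^ (k-j) ≤ v ^ (k-j) := pow_le_pow_left₀ hu huv _
        calc v ^ j * (u ^ j * u ^ (k-j)) = (u^j * v^j) * u^(k-j) := by ring
          _ ≤ (u^j * v^j) * v^(k-j) := by
              apply mul_le_mul_of_nonneg_left this (by positivity)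
          _ = u ^ j * (v ^ j * v ^ (k-j)) := by ring
      have hrw : bCoef ν j * bCoef (ν-1) k * (v ^ j * u ^ k - u ^ j * v ^ k)
          + bCoef ν k * bCoef (ν-1) j * (v ^ k * u ^ j - u ^ k * v ^ j)
          = (bCoef ν j * bCoef (ν-1) k - bCoef ν k * bCoef (ν-1) j)
            * (v ^ j * u ^ k - u ^ j * v ^ k) := by ring
      rw [hrw]
      exact mul_nonpos_of_nonneg_of_nonpos (by linarith) (by linarith)
    rcases le_total j k with h | h
    · exact hterm j k h
    · have := hterm k j h; linarith
  have h2sum : (2:ℝ) * ∑' p, c p ≤ 0 := by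
    have : (2:ℝ) * ∑' p, c p = ∑' p : ℕ × ℕ, (c p + c (p.2, p.1)) := by
      have hsw : Summable (fun p : ℕ × ℕ => c (p.2, p.1)) :=
        ((Equiv.prodComm ℕ ℕ).summable_iff).mpr hcS
      rw [two_mul]
      nth_rewrite 2 [hswap]
      exact (Summable.tsum_add hcS hsw).symm
    rw [this]
    exact tsum_nonpos hkey
  have : ∑' p, c p ≤ 0 := by linarith
  linarith [htsum ▸ this]

/-- Series representation of `besselI`. -/
lemma besselI_eq {ν t : ℝ} (ht : 0 < t) :
    besselI ν t = (t/2) ^ ν * bSum ν ((t/2)^2) := by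
  have ht2 : (0:ℝ) < t/2 := by linarith
  unfold besselI bSum
  rw [← tsum_mul_left]
  apply tsum_congr
  intro k
  have h1 : (t/2) ^ (ν + 2*(k:ℝ)) = (t/2) ^ ν * ((t/2)^2) ^ k := by
    rw [Real.rpow_add ht2]
    congr 1
    have : (2 * (k:ℝ)) = ((2*k : ℕ) : ℝ) := by push_cast; ring
    rw [this, Real.rpow_natCast, pow_mul]
  rw [h1]
  unfold bCoef
  ring

/-- for `ν > 1/2`, `r_ν(t)/t` is decreasing on `(0, ∞)`. -/
theorem besselRatio_div_self_antitoneOn (ν : ℝ) (hν : 1 / 2 < ν) :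
    AntitoneOn (fun t : ℝ => besselRatio ν t / t) (Set.Ioi 0) := by
  have hν' : -(1/2 : ℝ) < ν := by linarith
  have hν1 : -(1/2 : ℝ) < ν - 1 := by linarith
  have key : ∀ t : ℝ, 0 < t →
      besselRatio ν t / t = bSum ν ((t/2)^2) / (2 * bSum (ν-1) ((t/2)^2)) := by
    intro t ht
    have ht2 : (0:ℝ) < t/2 := by linarith
    have hx : (0:ℝ) ≤ (t/2)^2 := by positivity
    have hF := bSum_pos hν' hx
    have hG := bSum_pos hν1 hx
    have hr : (t/2) ^ ν = (t/2) ^ (ν-1) * (t/2) := by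
      rw [← Real.rpow_add_one (ne_of_gt ht2) (ν-1)]; ring_nf
    have hrp : (0:ℝ) < (t/2) ^ (ν-1 : ℝ) := Real.rpow_pos_of_pos ht2 _
    unfold besselRatio
    rw [besselI_eq ht, besselI_eq ht, hr, mul_assoc, mul_div_mul_left _ _ (ne_of_gt hrp)]
    rw [div_div, eq_div_iff (by positivity), div_mul_eq_mul_div, div_eq_iff (by positivity)]
    ring
  intro s hs t ht hst
  simp only [Set.mem_Ioi] at hs ht
  show besselRatio ν t / t ≤ besselRatio ν s / s
  rw [key s hs, key t ht]
  have hxs : (0:ℝ) ≤ (s/2)^2 := by positivity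
  have hxst : (s/2)^2 ≤ (t/2)^2 := by
    apply pow_le_pow_left₀ (by linarith) (by linarith)
  have hFs := bSum_pos hν' hxs
  have hGs := bSum_pos hν1 hxs
  have hxt : (0:ℝ) ≤ (t/2)^2 := by positivity
  have hFt := bSum_pos hν' hxt
  have hGt := bSum_pos hν1 hxt
  rw [div_le_div_iff₀ (by positivity) (by positivity)]
  have := cross_ineq hν hxs hxst
  nlinarith [this]
end

section
/- Let 0 < t₁ < t₂ and ν > 1/2. Then the function s ↦ cosh(t₂ s)/cosh(t₁ s) is increasing on (0,1); consequently, the ratio (∫_0^1 (1-s²) g(s,t) ds)/(∫_0^1 g(s,t) ds), with g(s,t)=(1-s²)^{ν-3/2} cosh(ts), is decreasing in t on (0, ∞). -/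
open Real Set Filter MeasureTheory

/-- TP₂ property of `cosh(ts)`. -/
private lemma coshTP2 {t₁ t₂ x y : ℝ} (ht₁ : 0 ≤ t₁) (ht : t₁ ≤ t₂) (hx : 0 ≤ x)
    (hxy : x ≤ y) :
    Real.cosh (t₂ * x) * Real.cosh (t₁ * y) ≤ Real.cosh (t₁ * x) * Real.cosh (t₂ * y) := by
  have hy : 0 ≤ y := hx.trans hxy
  have e1 : Real.cosh (t₂ * x) * Real.cosh (t₁ * y)
      = (Real.cosh (t₂ * x + t₁ * y) + Real.cosh (t₂ * x - t₁ * y)) / 2 := by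
    rw [Real.cosh_add, Real.cosh_sub]; ring
  have e2 : Real.cosh (t₁ * x) * Real.cosh (t₂ * y)
      = (Real.cosh (t₁ * x + t₂ * y) + Real.cosh (t₁ * x - t₂ * y)) / 2 := by
    rw [Real.cosh_add, Real.cosh_sub]; ring
  rw [e1, e2]
  have h1 : Real.cosh (t₂ * x + t₁ * y) ≤ Real.cosh (t₁ * x + t₂ * y) := by
    rw [Real.cosh_le_cosh, abs_of_nonneg (by nlinarith), abs_of_nonneg (by nlinarith)]
    nlinarith
  have h2 : Real.cosh (t₂ * x - t₁ * y) ≤ Real.cosh (t₁ * x - t₂ * y) := by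
    have habs : |t₁ * x - t₂ * y| = t₂ * y - t₁ * x := by
      rw [abs_of_nonpos (by nlinarith)]; ring
    rw [Real.cosh_le_cosh, habs, abs_le]
    constructor <;> nlinarith
  linarith

/-- Integrability of the weight `(1-s²)^p cosh(ts)` on `(0,1)` for `p > -1`. -/
private lemma integrable_w {p : ℝ} (hp : -1 < p) (t : ℝ) :
    IntegrableOn (fun s : ℝ => (1 - s ^ 2) ^ p * Real.cosh (t * s)) (Ioo (0:ℝ) 1) := by
  set C : ℝ := ((2:ℝ) ^ p + 1) * Real.cosh |t| with hC
  have hC0 : 0 ≤ C := by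
    have := Real.rpow_pos_of_pos (by norm_num : (0:ℝ) < 2) p
    positivity
  -- dominating function
  have hgInt : IntegrableOn (fun s : ℝ => C * (1 - s) ^ p) (Ioo (0:ℝ) 1) := by
    have h1 : IntervalIntegrable (fun x : ℝ => x ^ p) volume 0 1 :=
      intervalIntegral.intervalIntegrable_rpow' hp
    have h2 : IntervalIntegrable (fun x : ℝ => (1 - x) ^ p) volume 1 0 := by
      simpa using h1.comp_sub_left 1
    have h3 : IntegrableOn (fun x : ℝ => (1 - x) ^ p) (Ioc (0:ℝ) 1) := by
      rw [← intervalIntegrable_iff_integrableOn_Ioc_of_le zero_le_one]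
      exact h2.symm
    exact ((h3.mono_set Ioo_subset_Ioc_self).const_mul C)
  have hmeas : AEStronglyMeasurable (fun s : ℝ => (1 - s ^ 2) ^ p * Real.cosh (t * s))
      (volume.restrict (Ioo (0:ℝ) 1)) := by
    have hc : ContinuousOn (fun s : ℝ => (1 - s ^ 2) ^ p * Real.cosh (t * s)) (Ioo 0 1) := by
      apply ContinuousOn.mul
      · apply ContinuousOn.rpow_const (by fun_prop)
        intro x hx
        left
        nlinarith [hx.1, hx.2]
      · fun_prop
    exact hc.aestronglyMeasurable measurableSet_Ioo
  refine Integrable.mono hgInt hmeas ?_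
  rw [ae_restrict_iff' measurableSet_Ioo]
  refine Eventually.of_forall fun s hs => ?_
  obtain ⟨hs0, hs1⟩ := hs
  have h1s : 0 < 1 - s := by linarith
  have h1s' : 0 < 1 + s := by linarith
  have hbase : (0:ℝ) < 1 - s ^ 2 := by nlinarith
  have hsplit : (1 - s ^ 2) ^ p = (1 - s) ^ p * (1 + s) ^ p := by
    rw [← Real.mul_rpow h1s.le h1s'.le]
    ring_nf
  have hfac : (1 + s) ^ p ≤ (2:ℝ) ^ p + 1 := by
    rcases le_or_gt 0 p with hp' | hp'
    · have : (1 + s) ^ p ≤ (2:ℝ) ^ p := Real.rpow_le_rpow h1s'.le (by linarith) hp'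
      linarith
    · have h1 : (1 + s) ^ p ≤ 1 := Real.rpow_le_one_of_one_le_of_nonpos (by linarith) hp'.le
      have h2 : (0:ℝ) < (2:ℝ) ^ p := Real.rpow_pos_of_pos (by norm_num) p
      linarith
  have hcosh : Real.cosh (t * s) ≤ Real.cosh |t| := by
    rw [Real.cosh_le_cosh, abs_abs, abs_mul]
    calc |t| * |s| ≤ |t| * 1 := by
          apply mul_le_mul_of_nonneg_left _ (abs_nonneg t)
          rw [abs_of_pos hs0]; exact hs1.le
      _ = |t| := mul_one _
  have hcosh0 : 0 < Real.cosh (t * s) := Real.cosh_pos _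
  have hleft : ‖(1 - s ^ 2) ^ p * Real.cosh (t * s)‖ = (1 - s ^ 2) ^ p * Real.cosh (t * s) := by
    rw [norm_of_nonneg]
    exact mul_nonneg (Real.rpow_pos_of_pos hbase p).le hcosh0.le
  have hright : ‖C * (1 - s) ^ p‖ = C * (1 - s) ^ p := by
    rw [norm_of_nonneg]
    exact mul_nonneg hC0 (Real.rpow_pos_of_pos h1s p).le
  rw [hleft, hright, hsplit, hC]
  have h1sp : (0:ℝ) < (1 - s) ^ p := Real.rpow_pos_of_pos h1s p
  have h1sp' : (0:ℝ) ≤ (1 + s) ^ p := (Real.rpow_pos_of_pos h1s' p).le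
  have hcosh' : (0:ℝ) ≤ Real.cosh |t| := (Real.cosh_pos _).le
  nlinarith [mul_le_mul hfac hcosh hcosh0.le (by positivity)]

private lemma integrable_w' {p : ℝ} (hp : -1 < p) (t : ℝ) :
    IntegrableOn (fun s : ℝ => (1 - s ^ 2) * ((1 - s ^ 2) ^ p * Real.cosh (t * s)))
      (Ioo (0:ℝ) 1) := by
  refine Integrable.mono (integrable_w hp t) ?_ ?_
  · have hc : ContinuousOn
        (fun s : ℝ => (1 - s ^ 2) * ((1 - s ^ 2) ^ p * Real.cosh (t * s))) (Ioo 0 1) := by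
      apply ContinuousOn.mul (by fun_prop)
      apply ContinuousOn.mul
      · apply ContinuousOn.rpow_const (by fun_prop)
        intro x hx
        left
        nlinarith [hx.1, hx.2]
      · fun_prop
    exact hc.aestronglyMeasurable measurableSet_Ioo
  · rw [ae_restrict_iff' measurableSet_Ioo]
    refine Eventually.of_forall fun s hs => ?_
    obtain ⟨hs0, hs1⟩ := hs
    have h1 : |1 - s ^ 2| ≤ 1 := by rw [abs_le]; constructor <;> nlinarith
    calc ‖(1 - s ^ 2) * ((1 - s ^ 2) ^ p * Real.cosh (t * s))‖
        = |1 - s ^ 2| * ‖(1 - s ^ 2) ^ p * Real.cosh (t * s)‖ := by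
          rw [norm_mul, Real.norm_eq_abs]
      _ ≤ 1 * ‖(1 - s ^ 2) ^ p * Real.cosh (t * s)‖ :=
          mul_le_mul_of_nonneg_right h1 (norm_nonneg _)
      _ = ‖(1 - s ^ 2) ^ p * Real.cosh (t * s)‖ := one_mul _

private lemma integral_w_pos {p : ℝ} (hp : -1 < p) (t : ℝ) :
    0 < ∫ s in (0:ℝ)..1, (1 - s ^ 2) ^ p * Real.cosh (t * s) := by
  apply intervalIntegral.intervalIntegral_pos_of_pos_on
  · rw [intervalIntegrable_iff_integrableOn_Ioc_of_le zero_le_one,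
      integrableOn_Ioc_iff_integrableOn_Ioo]
    exact integrable_w hp t
  · intro x hx
    have hbase : (0:ℝ) < 1 - x ^ 2 := by nlinarith [hx.1, hx.2]
    exact mul_pos (Real.rpow_pos_of_pos hbase p) (Real.cosh_pos _)
  · norm_num

/-- for `0 < t₁ < t₂`, `s ↦ cosh(t₂ s)/cosh(t₁ s)` is increasing on `(0,1)`;
consequently, with `g(s,t) = (1-s²)^(ν-3/2) cosh(ts)` and `ν > 1/2`, the ratio
`(∫₀¹ (1-s²) g(s,t) ds)/(∫₀¹ g(s,t) ds)` is decreasing in `t` on `(0, ∞)`. -/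
theorem cosh_ratio_mono_and_weighted_average_antitone (ν : ℝ) (hν : 1 / 2 < ν) :
    (∀ t₁ t₂ : ℝ, 0 < t₁ → t₁ < t₂ →
      MonotoneOn (fun s : ℝ => Real.cosh (t₂ * s) / Real.cosh (t₁ * s)) (Set.Ioo 0 1)) ∧
    AntitoneOn (fun t : ℝ =>
        (∫ s in (0:ℝ)..1, (1 - s ^ 2) * ((1 - s ^ 2) ^ (ν - 3 / 2) * Real.cosh (t * s))) /
          ∫ s in (0:ℝ)..1, (1 - s ^ 2) ^ (ν - 3 / 2) * Real.cosh (t * s))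
      (Set.Ioi 0) := by
  have hp : (-1:ℝ) < ν - 3 / 2 := by linarith
  set p : ℝ := ν - 3 / 2 with hpdef
  constructor
  · -- Part 1: monotonicity of the cosh ratio
    intro t₁ t₂ ht₁ ht x hx y hy hxy
    have := coshTP2 (t₁ := t₁) (t₂ := t₂) ht₁.le ht.le hx.1.le hxy
    rw [div_le_div_iff₀ (Real.cosh_pos _) (Real.cosh_pos _)]
    nlinarith
  · -- Part 2: antitonicity of the weighted average
    intro t₁ ht₁ t₂ ht₂ ht
    simp only
    set μ : Measure ℝ := volume.restrict (Ioo 0 1) with hμ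
    set f₁ : ℝ → ℝ := fun s => (1 - s ^ 2) ^ p * Real.cosh (t₁ * s) with hf₁
    set f₂ : ℝ → ℝ := fun s => (1 - s ^ 2) ^ p * Real.cosh (t₂ * s) with hf₂
    set h₁ : ℝ → ℝ := fun s => (1 - s ^ 2) * ((1 - s ^ 2) ^ p * Real.cosh (t₁ * s)) with hh₁
    set h₂ : ℝ → ℝ := fun s => (1 - s ^ 2) * ((1 - s ^ 2) ^ p * Real.cosh (t₂ * s)) with hh₂
    have hf₁i : Integrable f₁ μ := integrable_w hp t₁
    have hf₂i : Integrable f₂ μ := integrable_w hp t₂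
    have hh₁i : Integrable h₁ μ := integrable_w' hp t₁
    have hh₂i : Integrable h₂ μ := integrable_w' hp t₂
    -- convert interval integrals to integrals over μ
    have conv : ∀ F : ℝ → ℝ, (∫ s in (0:ℝ)..1, F s) = ∫ s, F s ∂μ := by
      intro F
      rw [intervalIntegral.integral_of_le zero_le_one, integral_Ioc_eq_integral_Ioo]
    -- key inequality via double integral
    have key : (∫ s, h₂ s ∂μ) * (∫ s, f₁ s ∂μ) ≤ (∫ s, h₁ s ∂μ) * (∫ s, f₂ s ∂μ) := by
      set K : ℝ × ℝ → ℝ := fun z =>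
        f₂ z.1 * h₁ z.2 - f₁ z.1 * h₂ z.2 - h₂ z.1 * f₁ z.2 + h₁ z.1 * f₂ z.2 with hK
      have hKpt : ∀ z : ℝ × ℝ, z ∈ Ioo (0:ℝ) 1 ×ˢ Ioo (0:ℝ) 1 → 0 ≤ K z := by
        rintro ⟨s, u⟩ ⟨hs, hu⟩
        have hw : (0:ℝ) ≤ (1 - s ^ 2) ^ p * (1 - u ^ 2) ^ p := by
          have hbs : (0:ℝ) < 1 - s ^ 2 := by nlinarith [hs.1, hs.2]
          have hbu : (0:ℝ) < 1 - u ^ 2 := by nlinarith [hu.1, hu.2]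
          exact mul_nonneg (Real.rpow_pos_of_pos hbs p).le (Real.rpow_pos_of_pos hbu p).le
        have hexp : K (s, u) =
            ((1 - u ^ 2) - (1 - s ^ 2)) *
              (Real.cosh (t₂ * s) * Real.cosh (t₁ * u)
                - Real.cosh (t₁ * s) * Real.cosh (t₂ * u)) *
              ((1 - s ^ 2) ^ p * (1 - u ^ 2) ^ p) := by
          simp only [hK, hf₁, hf₂, hh₁, hh₂]
          ring
        rw [hexp]
        rcases le_total s u with hsu | hsu
        · have hA : (1 - u ^ 2) - (1 - s ^ 2) ≤ 0 := by nlinarith [hs.1.le]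
          have hB : Real.cosh (t₂ * s) * Real.cosh (t₁ * u)
              - Real.cosh (t₁ * s) * Real.cosh (t₂ * u) ≤ 0 :=
            sub_nonpos.mpr (coshTP2 ht₁.le ht hs.1.le hsu)
          nlinarith [hw, mul_nonneg (neg_nonneg.mpr hA) (neg_nonneg.mpr hB)]
        · have hA : 0 ≤ (1 - u ^ 2) - (1 - s ^ 2) := by nlinarith [hu.1.le]
          have hB : 0 ≤ Real.cosh (t₂ * s) * Real.cosh (t₁ * u)
              - Real.cosh (t₁ * s) * Real.cosh (t₂ * u) := by
            have := coshTP2 ht₁.le ht hu.1.le hsu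
            nlinarith
          exact mul_nonneg (mul_nonneg hA hB) hw
      have hI0 : 0 ≤ ∫ z, K z ∂(μ.prod μ) := by
        apply integral_nonneg_of_ae
        rw [hμ, Measure.prod_restrict]
        filter_upwards [ae_restrict_mem (measurableSet_Ioo.prod measurableSet_Ioo)] with z hz
        exact hKpt z hz
      have hIeq : (∫ z, K z ∂(μ.prod μ)) =
          (∫ s, f₂ s ∂μ) * (∫ s, h₁ s ∂μ) - (∫ s, f₁ s ∂μ) * (∫ s, h₂ s ∂μ)
            - (∫ s, h₂ s ∂μ) * (∫ s, f₁ s ∂μ) + (∫ s, h₁ s ∂μ) * (∫ s, f₂ s ∂μ) := by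
        have i1 : Integrable (fun z : ℝ × ℝ => f₂ z.1 * h₁ z.2) (μ.prod μ) :=
          hf₂i.mul_prod hh₁i
        have i2 : Integrable (fun z : ℝ × ℝ => f₁ z.1 * h₂ z.2) (μ.prod μ) :=
          hf₁i.mul_prod hh₂i
        have i3 : Integrable (fun z : ℝ × ℝ => h₂ z.1 * f₁ z.2) (μ.prod μ) :=
          hh₂i.mul_prod hf₁i
        have i4 : Integrable (fun z : ℝ × ℝ => h₁ z.1 * f₂ z.2) (μ.prod μ) :=
          hh₁i.mul_prod hf₂i
        have i12 : Integrable (fun z : ℝ × ℝ => f₂ z.1 * h₁ z.2 - f₁ z.1 * h₂ z.2)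
            (μ.prod μ) := i1.sub i2
        have i123 : Integrable
            (fun z : ℝ × ℝ => f₂ z.1 * h₁ z.2 - f₁ z.1 * h₂ z.2 - h₂ z.1 * f₁ z.2)
            (μ.prod μ) := i12.sub i3
        simp only [hK]
        rw [integral_add i123 i4, integral_sub i12 i3, integral_sub i1 i2,
          integral_prod_mul, integral_prod_mul, integral_prod_mul, integral_prod_mul]
      rw [hIeq] at hI0
      linarith
    rw [conv, conv, conv, conv]
    have hpos₁ : 0 < ∫ s, f₁ s ∂μ := by
      have := integral_w_pos hp t₁
      rwa [conv] at this
    have hpos₂ : 0 < ∫ s, f₂ s ∂μ := by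
      have := integral_w_pos hp t₂
      rwa [conv] at this
    rw [div_le_div_iff₀ hpos₂ hpos₁]
    linarith
end

section
/- For ν ≥ 1/2, a > 0, and f(t) = (t^ν / a^{ν-1}) exp(-(t²+a²)/2) I_{ν-1}(at) on (0,∞), the function t ↦ f'(t)/(t f(t)) is decreasing on (0, ∞). Explicitly, f'(t)/(t f(t)) = (2ν-1)/t² - 1 + a r_ν(at)/t. -/
set_option maxHeartbeats 1000000

open Real Set Filter MeasureTheory

namespace BesselAux

/-- Taylor coefficient. -/
noncomputable def c (μ : ℝ) (k : ℕ) : ℝ :=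
  1 / ((Nat.factorial k : ℝ) * Real.Gamma (μ + k + 1))

/-- `G μ x = ∑ c μ k * x^k`, so that `besselI μ t = (t/2)^μ * G μ (t²/4)` for `t > 0`. -/
noncomputable def G (μ x : ℝ) : ℝ := ∑' k : ℕ, c μ k * x ^ k

lemma arg_pos {μ : ℝ} (hμ : -1 < μ) (k : ℕ) : 0 < μ + k + 1 := by
  have : (0:ℝ) ≤ k := Nat.cast_nonneg k
  linarith

lemma c_pos {μ : ℝ} (hμ : -1 < μ) (k : ℕ) : 0 < c μ k := by
  have h1 := Real.Gamma_pos_of_pos (arg_pos hμ k)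
  have h2 : (0:ℝ) < (Nat.factorial k : ℝ) := by positivity
  unfold c; positivity

lemma c_succ {μ : ℝ} (hμ : -1 < μ) (k : ℕ) :
    c μ (k + 1) = c μ k / (((k:ℝ) + 1) * (μ + k + 1)) := by
  have harg : (μ + ((k:ℕ):ℝ) + 1) ≠ 0 := ne_of_gt (arg_pos hμ k)
  have h1 : Real.Gamma (μ + ((k+1:ℕ):ℝ) + 1) = (μ + k + 1) * Real.Gamma (μ + k + 1) := by
    have he : (μ + ((k+1:ℕ):ℝ) + 1) = (μ + k + 1) + 1 := by push_cast; ring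
    rw [he, Real.Gamma_add_one harg]
  have hgp := Real.Gamma_pos_of_pos (arg_pos hμ k)
  have hfp : (0:ℝ) < (Nat.factorial k : ℝ) := by positivity
  unfold c
  rw [h1, Nat.factorial_succ]
  push_cast
  field_simp

lemma summable_c_mul_pow {μ : ℝ} (hμ : -1 < μ) (x : ℝ) :
    Summable fun k : ℕ => c μ k * x ^ k := by
  rcases eq_or_ne x 0 with rfl | hx
  · apply summable_of_ne_finset_zero (s := {0})
    intro k hk
    simp only [Finset.mem_singleton] at hk
    simp [zero_pow hk]
  · apply summable_of_ratio_norm_eventually_le (r := 1/2) (by norm_num)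
    have h1 : ∀ᶠ k : ℕ in atTop, 2 * |x| ≤ (k:ℝ) + 1 := by
      have := tendsto_natCast_atTop_atTop (R := ℝ)
      filter_upwards [this.eventually_ge_atTop (2 * |x|)] with k hk
      linarith
    have h2 : ∀ᶠ k : ℕ in atTop, 1 ≤ μ + k + 1 := by
      have := tendsto_natCast_atTop_atTop (R := ℝ)
      filter_upwards [this.eventually_ge_atTop (-μ)] with k hk
      linarith
    filter_upwards [h1, h2] with k hk1 hk2
    have hc := c_pos hμ k
    have hc' := c_pos hμ (k+1)
    have hxpos : 0 < |x| := abs_pos.mpr hx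
    have key : c μ (k+1) * |x| ≤ (1/2) * c μ k := by
      rw [c_succ hμ k]
      rw [div_mul_eq_mul_div, div_le_iff₀ (by nlinarith)]
      have hprod : 2 * |x| ≤ ((k:ℝ)+1) * (μ + k + 1) := by nlinarith
      nlinarith
    calc ‖c μ (k+1) * x ^ (k+1)‖ = (c μ (k+1) * |x|) * |x| ^ k := by
          rw [norm_mul, Real.norm_eq_abs, Real.norm_eq_abs, abs_of_pos hc', pow_succ, abs_mul,
            abs_pow]; ring
      _ ≤ ((1/2) * c μ k) * |x| ^ k := by
          apply mul_le_mul_of_nonneg_right key (by positivity)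
      _ = 1/2 * ‖c μ k * x ^ k‖ := by
          rw [norm_mul, Real.norm_eq_abs, Real.norm_eq_abs, abs_of_pos hc, abs_pow]; ring

lemma G_pos {μ : ℝ} (hμ : -1 < μ) {x : ℝ} (hx : 0 ≤ x) : 0 < G μ x := by
  have hs := summable_c_mul_pow hμ x
  refine Summable.tsum_pos hs (fun k => by have := (c_pos hμ k).le; positivity) 0 ?_
  simpa using c_pos hμ 0


lemma c_shift {μ : ℝ} (hμ : -1 < μ) (k : ℕ) :
    ((k:ℝ) + 1) * c μ (k + 1) = c (μ + 1) k := by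
  rw [c_succ hμ k]
  have h : c (μ + 1) k = 1 / ((Nat.factorial k : ℝ) * Real.Gamma (μ + k + 1 + 1)) := by
    unfold c; ring_nf
  rw [h, Real.Gamma_add_one (ne_of_gt (arg_pos hμ k))]
  have h1 := c_pos hμ k
  have h2 := arg_pos hμ k
  have h3 : (0:ℝ) < (Nat.factorial k : ℝ) := by positivity
  have h4 := Real.Gamma_pos_of_pos h2
  unfold c at *
  have hk1 : (0:ℝ) < (k:ℝ) + 1 := by positivity
  field_simp

lemma hasDerivAt_G {μ : ℝ} (hμ : -1 < μ) (x : ℝ) :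
    HasDerivAt (G μ) (G (μ + 1) x) x := by
  have hμ1 : (-1:ℝ) < μ + 1 := by linarith
  set R : ℝ := |x| + 1 with hR
  have hRpos : 0 < R := by positivity
  have hxR : x ∈ Set.Ioo (-R) R := by
    constructor
    · nlinarith [neg_abs_le x]
    · nlinarith [le_abs_self x]
  have h0R : (0:ℝ) ∈ Set.Ioo (-R) R := ⟨by linarith, hRpos⟩
  set u : ℕ → ℝ := fun k => (k:ℝ) * c μ k * R ^ (k - 1) with hu_def
  have hu_succ : ∀ j : ℕ, u (j + 1) = c (μ + 1) j * R ^ j := by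
    intro j
    simp only [hu_def, Nat.add_sub_cancel, Nat.cast_add, Nat.cast_one]
    rw [← c_shift hμ j]
  have hu : Summable u := by
    rw [← summable_nat_add_iff 1]
    simp only [hu_succ]
    exact summable_c_mul_pow hμ1 R
  set g' : ℕ → ℝ → ℝ := fun k z => c μ k * ((k:ℝ) * z ^ (k - 1)) with hg'_def
  have key : HasDerivAt (fun z => ∑' k : ℕ, c μ k * z ^ k) (∑' k : ℕ, g' k x) x := by
    refine hasDerivAt_tsum_of_isPreconnected hu isOpen_Ioo
      (convex_Ioo (-R) R).isPreconnected
      (fun k y _ => (hasDerivAt_pow k y).const_mul (c μ k))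
      (fun k y hy => ?_) h0R ?_ hxR
    · -- bound
      have hyR : |y| ≤ R := by
        rw [abs_le]; exact ⟨hy.1.le, hy.2.le⟩
      simp only [hg'_def, hu_def, Real.norm_eq_abs]
      rw [abs_mul, abs_mul, abs_of_pos (c_pos hμ k), Nat.abs_cast, abs_pow]
      calc c μ k * ((k:ℝ) * |y| ^ (k-1)) ≤ c μ k * ((k:ℝ) * R ^ (k-1)) := by
            apply mul_le_mul_of_nonneg_left _ (c_pos hμ k).le
            apply mul_le_mul_of_nonneg_left _ (Nat.cast_nonneg k)
            exact pow_le_pow_left₀ (abs_nonneg y) hyR _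
        _ = (k:ℝ) * c μ k * R ^ (k-1) := by ring
    · -- summable at 0
      apply summable_of_ne_finset_zero (s := {0})
      intro k hk
      simp only [Finset.mem_singleton] at hk
      simp [zero_pow hk]
  have hsum_g' : ∑' k : ℕ, g' k x = G (μ + 1) x := by
    have hsg' : Summable (fun k => g' k x) := by
      rw [← summable_nat_add_iff 1]
      have : (fun j : ℕ => g' (j + 1) x) = fun j => c (μ+1) j * x ^ j := by
        funext j
        simp only [hg'_def, Nat.add_sub_cancel]
        rw [← c_shift hμ j]; push_cast; ring
      rw [this]
      exact summable_c_mul_pow hμ1 x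
    rw [Summable.tsum_eq_zero_add hsg']
    have h0 : g' 0 x = 0 := by simp [hg'_def]
    rw [h0, zero_add]
    have : (fun j : ℕ => g' (j + 1) x) = fun j => c (μ+1) j * x ^ j := by
      funext j
      simp only [hg'_def, Nat.add_sub_cancel]
      rw [← c_shift hμ j]; push_cast; ring
    rw [this]
    rfl
  rw [← hsum_g']
  exact key


lemma besselI_eq {μ : ℝ} (t : ℝ) (ht : 0 < t) :
    besselI μ t = (t / 2) ^ μ * G μ (t ^ 2 / 4) := by
  have ht2 : (0:ℝ) < t / 2 := by linarith
  unfold besselI G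
  rw [← tsum_mul_left]
  congr 1
  funext k
  have he : μ + 2 * (k:ℝ) = μ + ((2 * k : ℕ) : ℝ) := by push_cast; ring
  rw [he, Real.rpow_add ht2, Real.rpow_natCast, pow_mul]
  have h4 : (t / 2) ^ 2 = t ^ 2 / 4 := by ring
  rw [h4]
  unfold c
  field_simp

lemma besselI_pos {μ : ℝ} (hμ : -1 < μ) {t : ℝ} (ht : 0 < t) : 0 < besselI μ t := by
  rw [besselI_eq t ht]
  have h1 : (0:ℝ) < (t/2) ^ μ := Real.rpow_pos_of_pos (by linarith) μ
  have h2 := G_pos hμ (x := t^2/4) (by positivity)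
  positivity

lemma hasDerivAt_besselI {μ : ℝ} (hμ : -1 < μ) {t : ℝ} (ht : 0 < t) :
    HasDerivAt (besselI μ) (besselI (μ + 1) t + μ / t * besselI μ t) t := by
  have ht2 : (0:ℝ) < t / 2 := by linarith
  have h1 : HasDerivAt (fun s : ℝ => (s / 2) ^ μ) (μ * (t/2) ^ (μ - 1) * (1/2)) t := by
    have hin : HasDerivAt (fun s : ℝ => s / 2) (1/2) t := (hasDerivAt_id t).div_const 2
    have hout : HasDerivAt (fun x : ℝ => x ^ μ) (μ * (t/2) ^ (μ - 1)) (t/2) :=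
      Real.hasDerivAt_rpow_const (Or.inl (ne_of_gt ht2))
    exact hout.comp t hin
  have h2 : HasDerivAt (fun s : ℝ => G μ (s ^ 2 / 4)) (G (μ+1) (t^2/4) * (t/2)) t := by
    have hin : HasDerivAt (fun s : ℝ => s ^ 2 / 4) (t/2) t := by
      have := (hasDerivAt_pow 2 t).div_const 4
      refine this.congr_deriv ?_
      push_cast; ring
    exact (hasDerivAt_G hμ (t^2/4)).comp t hin
  have hg : HasDerivAt (fun s : ℝ => (s / 2) ^ μ * G μ (s ^ 2 / 4))
      (μ * (t/2) ^ (μ - 1) * (1/2) * G μ (t^2/4) + (t/2) ^ μ * (G (μ+1) (t^2/4) * (t/2))) t :=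
    h1.mul h2
  have heq : besselI μ =ᶠ[nhds t] fun s => (s / 2) ^ μ * G μ (s ^ 2 / 4) := by
    filter_upwards [Ioi_mem_nhds ht] with s hs
    exact besselI_eq s hs
  have hD := hg.congr_of_eventuallyEq heq
  refine hD.congr_deriv ?_
  rw [besselI_eq t ht, besselI_eq t ht]
  have hpow : (t/2) ^ (μ+1) = (t/2) ^ μ * (t/2) := Real.rpow_add_one (ne_of_gt ht2) μ
  have hpow2 : (t/2) ^ μ = (t/2) ^ (μ-1) * (t/2) := by
    rw [← Real.rpow_add_one (ne_of_gt ht2)]; ring_nf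
  rw [hpow, hpow2]
  field_simp
  ring

lemma besselRatio_div {ν : ℝ} (hν : 1/2 ≤ ν) {u : ℝ} (hu : 0 < u) :
    besselRatio ν u / u = G ν (u^2/4) / (2 * G (ν-1) (u^2/4)) := by
  have hu2 : (0:ℝ) < u / 2 := by linarith
  unfold besselRatio
  rw [besselI_eq u hu, besselI_eq u hu]
  have hpow : (u/2) ^ ν = (u/2) ^ (ν-1) * (u/2) := by
    rw [← Real.rpow_add_one (ne_of_gt hu2)]; ring_nf
  rw [hpow]
  have h1 : (0:ℝ) < (u/2) ^ (ν-1) := Real.rpow_pos_of_pos hu2 _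
  have h2 : (0:ℝ) < G (ν-1) (u^2/4) := G_pos (by linarith) (by positivity)
  field_simp


lemma c_nu_eq {ν : ℝ} (hν : 1/2 ≤ ν) (k : ℕ) : c ν k = c (ν - 1) k / (ν + k) := by
  have hk : (0:ℝ) < ν + k := by
    have : (0:ℝ) ≤ k := Nat.cast_nonneg k
    linarith
  have hrw : ν + (k:ℝ) + 1 = (ν - 1 + k + 1) + 1 := by ring
  have hne : ν - 1 + (k:ℝ) + 1 ≠ 0 := by
    intro h; apply ne_of_gt hk; linarith
  unfold c
  rw [hrw, Real.Gamma_add_one hne]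
  have h2 : ν - 1 + (k:ℝ) + 1 = ν + k := by ring
  rw [h2]
  have hfp : (0:ℝ) < (Nat.factorial k : ℝ) := by positivity
  have hgp : 0 < Real.Gamma (ν + k) := Real.Gamma_pos_of_pos hk
  field_simp

lemma cross_nonneg {ν : ℝ} (hν : 1/2 ≤ ν) {k j : ℕ} (hkj : k ≤ j) :
    0 ≤ c ν k * c (ν-1) j - c ν j * c (ν-1) k := by
  have hν' : (-1:ℝ) < ν - 1 := by linarith
  have hk : (0:ℝ) < ν + k := by
    have : (0:ℝ) ≤ k := Nat.cast_nonneg k; linarith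
  have hj : (0:ℝ) < ν + j := by
    have : (0:ℝ) ≤ j := Nat.cast_nonneg j; linarith
  have hkj' : ν + (k:ℝ) ≤ ν + j := by
    have : (k:ℝ) ≤ j := Nat.cast_le.mpr hkj; linarith
  rw [c_nu_eq hν k, c_nu_eq hν j]
  have hbk := c_pos hν' k
  have hbj := c_pos hν' j
  rw [div_mul_eq_mul_div, div_mul_eq_mul_div, sub_nonneg, div_le_div_iff₀ hj hk]
  rw [show c (ν-1) j * c (ν-1) k = c (ν-1) k * c (ν-1) j from by ring]
  exact mul_le_mul_of_nonneg_left hkj' (by positivity)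

lemma pow_cross_nonneg {x y : ℝ} (hx : 0 ≤ x) (hxy : x ≤ y) {k j : ℕ} (hkj : k ≤ j) :
    0 ≤ x ^ k * y ^ j - x ^ j * y ^ k := by
  obtain ⟨d, rfl⟩ := Nat.exists_eq_add_of_le hkj
  have hy : 0 ≤ y := le_trans hx hxy
  have h1 : x ^ d ≤ y ^ d := pow_le_pow_left₀ hx hxy d
  have e1 : x ^ (k + d) * y ^ k = (x ^ k * y ^ k) * x ^ d := by rw [pow_add]; ring
  have e2 : x ^ k * y ^ (k + d) = (x ^ k * y ^ k) * y ^ d := by rw [pow_add]; ring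
  rw [e1, e2, sub_nonneg]
  exact mul_le_mul_of_nonneg_left h1 (by positivity)

/-- Key monotonicity: `G ν / G (ν-1)` is antitone on `[0,∞)`. -/
lemma G_ratio_anti {ν : ℝ} (hν : 1/2 ≤ ν) {x y : ℝ} (hx : 0 ≤ x) (hxy : x ≤ y) :
    G ν y * G (ν-1) x ≤ G ν x * G (ν-1) y := by
  have hν0 : (-1:ℝ) < ν := by linarith
  have hν1 : (-1:ℝ) < ν - 1 := by linarith
  have hy : 0 ≤ y := le_trans hx hxy
  have hsAx := summable_c_mul_pow hν0 x
  have hsAy := summable_c_mul_pow hν0 y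
  have hsBx := summable_c_mul_pow hν1 x
  have hsBy := summable_c_mul_pow hν1 y
  have hnnAx : ∀ k, 0 ≤ c ν k * x ^ k := fun k => by have := (c_pos hν0 k).le; positivity
  have hnnAy : ∀ k, 0 ≤ c ν k * y ^ k := fun k => by have := (c_pos hν0 k).le; positivity
  have hnnBx : ∀ k, 0 ≤ c (ν-1) k * x ^ k := fun k => by have := (c_pos hν1 k).le; positivity
  have hnnBy : ∀ k, 0 ≤ c (ν-1) k * y ^ k := fun k => by have := (c_pos hν1 k).le; positivity
  have hp1 : Summable (fun p : ℕ × ℕ => (c ν p.1 * y ^ p.1) * (c (ν-1) p.2 * x ^ p.2)) :=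
    hsAy.mul_of_nonneg hsBx hnnAy hnnBx
  have hp2 : Summable (fun p : ℕ × ℕ => (c ν p.1 * x ^ p.1) * (c (ν-1) p.2 * y ^ p.2)) :=
    hsAx.mul_of_nonneg hsBy hnnAx hnnBy
  unfold G
  rw [Summable.tsum_mul_tsum hsAy hsBx hp1, Summable.tsum_mul_tsum hsAx hsBy hp2]
  rw [← sub_nonneg, ← Summable.tsum_sub hp2 hp1]
  set F : ℕ × ℕ → ℝ := fun p =>
    c ν p.1 * x ^ p.1 * (c (ν-1) p.2 * y ^ p.2) - c ν p.1 * y ^ p.1 * (c (ν-1) p.2 * x ^ p.2)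
    with hF_def
  have hF : Summable F := hp2.sub hp1
  have hFswap : Summable (fun p : ℕ × ℕ => F p.swap) := by
    have : (fun p : ℕ × ℕ => F p.swap) = F ∘ (Equiv.prodComm ℕ ℕ) := rfl
    rw [this]
    exact ((Equiv.prodComm ℕ ℕ).summable_iff).mpr hF
  have hswap_eq : ∑' p : ℕ × ℕ, F p.swap = ∑' p, F p := by
    exact (Equiv.prodComm ℕ ℕ).tsum_eq F
  have hpair : ∀ p : ℕ × ℕ, 0 ≤ F p + F p.swap := by
    rintro ⟨k, j⟩
    have key : F (k, j) + F (j, k) =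
        (c ν k * c (ν-1) j - c ν j * c (ν-1) k) * (x ^ k * y ^ j - x ^ j * y ^ k) := by
      simp only [hF_def]; ring
    simp only [Prod.swap]
    rw [key]
    rcases le_total k j with h | h
    · exact mul_nonneg (cross_nonneg hν h) (pow_cross_nonneg hx hxy h)
    · have h1 := cross_nonneg hν h
      have h2 := pow_cross_nonneg hx hxy h
      nlinarith
  have h2sum : 0 ≤ ∑' p, F p + ∑' p : ℕ × ℕ, F p.swap := by
    rw [← Summable.tsum_add hF hFswap]
    exact tsum_nonneg hpair
  rw [hswap_eq] at h2sum
  linarith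


lemma ratio_div_anti {ν : ℝ} (hν : 1/2 ≤ ν) {u v : ℝ} (hu : 0 < u) (huv : u ≤ v) :
    besselRatio ν v / v ≤ besselRatio ν u / u := by
  have hv : 0 < v := lt_of_lt_of_le hu huv
  rw [besselRatio_div hν hu, besselRatio_div hν hv]
  have hx : (0:ℝ) ≤ u^2/4 := by positivity
  have hxy : u^2/4 ≤ v^2/4 := by nlinarith
  have h := G_ratio_anti hν hx hxy
  have h1 : 0 < G (ν-1) (u^2/4) := G_pos (by linarith) hx
  have h2 : 0 < G (ν-1) (v^2/4) := G_pos (by linarith) (le_trans hx hxy)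
  rw [div_le_div_iff₀ (by linarith) (by linarith)]
  nlinarith


end BesselAux

open BesselAux

/-- for `ν ≥ 1/2`, `a > 0`, and the noncentral chi density
`f(t) = (t^ν/a^(ν-1)) exp(-(t²+a²)/2) I_{ν-1}(at)`, the map `t ↦ f'(t)/(t f(t))`
is decreasing on `(0, ∞)`, with the explicit formula
`f'(t)/(t f(t)) = (2ν-1)/t² - 1 + a r_ν(at)/t`. -/
theorem deriv_div_self_antitoneOn (ν a : ℝ) (hν : 1 / 2 ≤ ν) (ha : 0 < a)
    (f : ℝ → ℝ)
    (hf : ∀ t : ℝ, f t = t ^ ν / a ^ (ν - 1) * Real.exp (-(t ^ 2 + a ^ 2) / 2) *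
      besselI (ν - 1) (a * t)) :
    AntitoneOn (fun t : ℝ => deriv f t / (t * f t)) (Set.Ioi 0) ∧
    ∀ t : ℝ, 0 < t →
      deriv f t / (t * f t) = (2 * ν - 1) / t ^ 2 - 1 + a * besselRatio ν (a * t) / t := by
  have hμ : (-1:ℝ) < ν - 1 := by linarith
  have hfe : f = fun t => t ^ ν / a ^ (ν - 1) * Real.exp (-(t ^ 2 + a ^ 2) / 2) *
      besselI (ν - 1) (a * t) := funext hf
  have key : ∀ t : ℝ, 0 < t →
      deriv f t / (t * f t) = (2 * ν - 1) / t ^ 2 - 1 + a * besselRatio ν (a * t) / t := by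
    intro t ht
    have hat : 0 < a * t := by positivity
    set E : ℝ := Real.exp (-(t ^ 2 + a ^ 2) / 2) with hE
    set B : ℝ := besselI (ν - 1) (a * t) with hB
    set B' : ℝ := besselI ν (a * t) with hB'
    have hBpos : 0 < B := besselI_pos hμ hat
    have h1 : HasDerivAt (fun s : ℝ => s ^ ν / a ^ (ν - 1)) (ν * t ^ (ν - 1) / a ^ (ν - 1)) t :=
      (Real.hasDerivAt_rpow_const (Or.inl (ne_of_gt ht))).div_const _
    have h2 : HasDerivAt (fun s : ℝ => Real.exp (-(s ^ 2 + a ^ 2) / 2)) (-t * E) t := by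
      have hin : HasDerivAt (fun s : ℝ => -(s ^ 2 + a ^ 2) / 2) (-t) t := by
        have := (((hasDerivAt_pow 2 t).add_const (a ^ 2)).neg).div_const 2
        refine this.congr_deriv ?_
        push_cast; ring
      have := (Real.hasDerivAt_exp (-(t ^ 2 + a ^ 2) / 2)).comp t hin
      refine this.congr_deriv ?_
      rw [hE]; ring
    have h3 : HasDerivAt (fun s : ℝ => besselI (ν - 1) (a * s))
        ((B' + (ν - 1) / (a * t) * B) * a) t := by
      have hin : HasDerivAt (fun s : ℝ => a * s) a t := by
        simpa using (hasDerivAt_id t).const_mul a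
      have hout := hasDerivAt_besselI hμ hat
      have := hout.comp t hin
      rw [show ν - 1 + 1 = ν from by ring] at this
      exact this
    have hD : HasDerivAt f
        ((ν * t ^ (ν - 1) / a ^ (ν - 1) * E + t ^ ν / a ^ (ν - 1) * (-t * E)) * B +
          t ^ ν / a ^ (ν - 1) * E * ((B' + (ν - 1) / (a * t) * B) * a)) t := by
      rw [hfe]
      exact (h1.mul h2).mul h3
    rw [hD.deriv, hf t]
    have hEpos : 0 < E := Real.exp_pos _
    have htν : 0 < t ^ ν := Real.rpow_pos_of_pos ht ν
    have haν : 0 < a ^ (ν - 1) := Real.rpow_pos_of_pos ha _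
    have htν1 : t ^ (ν - 1) = t ^ ν / t := by
      rw [eq_div_iff (ne_of_gt ht), ← Real.rpow_add_one (ne_of_gt ht)]; ring_nf
    have hratio : besselRatio ν (a * t) = B' / B := rfl
    rw [htν1, hratio, ← hE, ← hB]
    field_simp
    ring
  refine ⟨?_, key⟩
  intro s hs t ht hst
  simp only [mem_Ioi] at hs ht
  dsimp only
  rw [key s hs, key t ht]
  have h1 : (2 * ν - 1) / t ^ 2 ≤ (2 * ν - 1) / s ^ 2 := by
    rw [div_le_div_iff₀ (by positivity) (by positivity)]
    have hs2 : s ^ 2 ≤ t ^ 2 := by nlinarith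
    nlinarith
  have e1 : a * besselRatio ν (a * t) / t = a ^ 2 * (besselRatio ν (a * t) / (a * t)) := by
    field_simp
  have e2 : a * besselRatio ν (a * s) / s = a ^ 2 * (besselRatio ν (a * s) / (a * s)) := by
    field_simp
  have h2 := ratio_div_anti hν (mul_pos ha hs) (by nlinarith : a * s ≤ a * t)
  have h3 : a ^ 2 * (besselRatio ν (a * t) / (a * t)) ≤
      a ^ 2 * (besselRatio ν (a * s) / (a * s)) :=
    mul_le_mul_of_nonneg_left h2 (by positivity)
  rw [e1, e2]
  linarith
end

section
/- If ν ≥ 1/2 and 0 < a ≤ 1, then the function f(t) = (t^ν / a^{ν-1}) exp(-(t²+a²)/2) I_{ν-1}(at) is log-concave on (0, ∞); in fact (d²/dt²) log f(t) ≤ a² - 1 ≤ 0 for all t > 0. -/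
open Real Set Filter MeasureTheory

lemma gammaArg_pos (μ : ℝ) (hμ : -(1/2:ℝ) ≤ μ) (k : ℕ) : 0 < μ + (k:ℝ) + 1 := by
  have : (0:ℝ) ≤ k := Nat.cast_nonneg k
  linarith

lemma gamma_pos (μ : ℝ) (hμ : -(1/2:ℝ) ≤ μ) (k : ℕ) :
    0 < Real.Gamma (μ + (k:ℝ) + 1) := Real.Gamma_pos_of_pos (gammaArg_pos μ hμ k)

/-- master summability -/
lemma summableAux (μ c : ℝ) (hμ : -(1/2:ℝ) ≤ μ) (hc : 0 < c) :
    Summable (fun k : ℕ => ((k:ℝ)+1) * c^k / ((Nat.factorial k : ℝ) * Real.Gamma (μ + (k:ℝ) + 1))) := by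
  apply summable_of_ratio_norm_eventually_le (r := 1/2) (by norm_num)
  filter_upwards [eventually_ge_atTop (⌈8*c⌉₊)] with k hk
  have hkc : (8:ℝ) * c ≤ (k:ℝ) + 1 := by
    calc (8:ℝ)*c ≤ (⌈8*c⌉₊ : ℝ) := Nat.le_ceil _
    _ ≤ (k:ℝ) := by exact_mod_cast hk
    _ ≤ (k:ℝ)+1 := by linarith
  have hg1 : 0 < Real.Gamma (μ + (k:ℝ) + 1) := gamma_pos μ hμ k
  have hg2 : 0 < Real.Gamma (μ + ((k:ℝ)+1) + 1) := by
    have h : μ + ((k:ℝ)+1) + 1 = μ + ((k+1:ℕ):ℝ) + 1 := by push_cast; ring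
    rw [h]; exact gamma_pos μ hμ (k+1)
  have hgrec : Real.Gamma (μ + ((k:ℝ)+1) + 1) = (μ + (k:ℝ) + 1) * Real.Gamma (μ + (k:ℝ) + 1) := by
    have h : μ + ((k:ℝ)+1) + 1 = (μ + (k:ℝ) + 1) + 1 := by ring
    rw [h, Real.Gamma_add_one (ne_of_gt (gammaArg_pos μ hμ k))]
  have hfac : ((Nat.factorial (k+1) : ℝ)) = ((k:ℝ)+1) * (Nat.factorial k : ℝ) := by
    push_cast [Nat.factorial_succ]; ring
  have hkpos : (0:ℝ) < (k:ℝ) + 1 := by positivity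
  have hfk : (0:ℝ) < (Nat.factorial k : ℝ) := by exact_mod_cast Nat.factorial_pos k
  have hhalf : (1:ℝ)/2 ≤ μ + (k:ℝ) + 1 := by have : (0:ℝ) ≤ k := Nat.cast_nonneg k; linarith
  have hargpos : 0 < μ + (k:ℝ) + 1 := gammaArg_pos μ hμ k
  set Y : ℝ := ((k:ℝ)+1) * c^k / ((Nat.factorial k : ℝ) * Real.Gamma (μ + (k:ℝ) + 1)) with hYdef
  have hYpos : 0 < Y := by
    apply div_pos (by positivity) (mul_pos hfk hg1)
  set R : ℝ := ((k:ℝ)+2)*c/(((k:ℝ)+1)^2*(μ+(k:ℝ)+1)) with hRdef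
  have hXeq : (((k:ℝ)+1)+1) * c^(k+1) / ((((k:ℝ)+1) * (Nat.factorial k : ℝ)) * Real.Gamma (μ + ((k:ℝ)+1) + 1)) = R * Y := by
    rw [hgrec, hRdef, hYdef]
    field_simp
    ring
  have hR : R ≤ 1/2 := by
    rw [hRdef, div_le_iff₀ (by positivity)]
    have hck : c ≤ ((k:ℝ)+1)/8 := by linarith
    have h1 : ((k:ℝ)+2)*c ≤ ((k:ℝ)+2)*(((k:ℝ)+1)/8) := by
      apply mul_le_mul_of_nonneg_left hck (by linarith)
    have h2 : ((k:ℝ)+2)*(((k:ℝ)+1)/8) ≤ (((k:ℝ)+1)^2)/4 := by nlinarith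
    have h3 : (((k:ℝ)+1)^2)/4 ≤ 1/2 * (((k:ℝ)+1)^2*(μ+(k:ℝ)+1)) := by nlinarith
    linarith
  have hRnonneg : 0 ≤ R := by rw [hRdef]; positivity
  rw [Real.norm_eq_abs, Real.norm_eq_abs]
  push_cast
  rw [abs_of_nonneg, abs_of_nonneg]
  · rw [hfac, hXeq]; exact mul_le_mul_of_nonneg_right hR hYpos.le
  · exact hYpos.le
  · exact le_of_lt (by apply div_pos (by positivity) (by positivity))

lemma rpow_split (x μ : ℝ) (hx : 0 < x) (k : ℕ) :
    x ^ (μ + 2*(k:ℝ)) = x ^ μ * (x^2)^k := by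
  rw [Real.rpow_add hx]
  congr 1
  have : (2*(k:ℝ)) = ((2*k : ℕ) : ℝ) := by push_cast; ring
  rw [this, Real.rpow_natCast, pow_mul]

/-- summability of series with coefficients (A + B k) and exponent offset `e`. -/
lemma summable_coef (μ x A B e : ℝ) (hμ : -(1/2:ℝ) ≤ μ) (hx : 0 < x) :
    Summable (fun k : ℕ => (A + B*(k:ℝ)) * (x/2) ^ (e + 2*(k:ℝ)) /
      ((Nat.factorial k : ℝ) * Real.Gamma (μ + (k:ℝ) + 1))) := by
  have hx2 : 0 < x/2 := by linarith
  have hc : 0 < (x/2)^2 := by positivity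
  apply Summable.of_norm_bounded (((summableAux μ ((x/2)^2) hμ hc).mul_left ((|A|+|B|) * (x/2)^e)))
  intro k
  have hg : 0 < Real.Gamma (μ + (k:ℝ) + 1) := gamma_pos μ hμ k
  have hfk : (0:ℝ) < (Nat.factorial k : ℝ) := by exact_mod_cast Nat.factorial_pos k
  rw [Real.norm_eq_abs, abs_div, abs_of_pos (mul_pos hfk hg), abs_mul,
    abs_of_pos (Real.rpow_pos_of_pos hx2 _), rpow_split _ _ hx2]
  have h1 : |A + B*(k:ℝ)| ≤ (|A|+|B|) * ((k:ℝ)+1) := by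
    calc |A + B*(k:ℝ)| ≤ |A| + |B| * (k:ℝ) := by
          refine le_trans (abs_add_le _ _) ?_
          rw [abs_mul, Nat.abs_cast]
      _ ≤ (|A|+|B|) * ((k:ℝ)+1) := by
          have hk : (0:ℝ) ≤ k := Nat.cast_nonneg k
          nlinarith [abs_nonneg A, abs_nonneg B]
  calc |A + B*(k:ℝ)| * ((x/2)^e * ((x/2)^2)^k) / ((Nat.factorial k : ℝ) * Real.Gamma (μ + (k:ℝ) + 1))
      ≤ ((|A|+|B|) * ((k:ℝ)+1)) * ((x/2)^e * ((x/2)^2)^k) / ((Nat.factorial k : ℝ) * Real.Gamma (μ + (k:ℝ) + 1)) := by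
        gcongr
    _ = (|A|+|B|) * (x/2)^e * (((k:ℝ)+1) * ((x/2)^2)^k / ((Nat.factorial k : ℝ) * Real.Gamma (μ + (k:ℝ) + 1))) := by
        ring

lemma summable_term (μ x : ℝ) (hμ : -(1/2:ℝ) ≤ μ) (hx : 0 < x) :
    Summable (fun k : ℕ => (x/2) ^ (μ + 2*(k:ℝ)) /
      ((Nat.factorial k : ℝ) * Real.Gamma (μ + (k:ℝ) + 1))) := by
  have := summable_coef μ x 1 0 μ hμ hx
  simpa using this

lemma besselI_pos (μ x : ℝ) (hμ : -(1/2:ℝ) ≤ μ) (hx : 0 < x) : 0 < besselI μ x := by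
  rw [besselI]
  apply Summable.tsum_pos (summable_term μ x hμ hx) _ 0
  · have h2 : 0 < x/2 := by linarith
    have hg := gamma_pos μ hμ 0
    positivity
  · intro k
    have h2 : 0 < x/2 := by linarith
    have := gamma_pos μ hμ k
    positivity

/-- termwise derivative of the Bessel series -/
lemma hasDerivAt_besselI_raw (μ x : ℝ) (hμ : -(1/2:ℝ) ≤ μ) (hx : 0 < x) :
    HasDerivAt (besselI μ)
      (∑' k : ℕ, (μ/2 + (k:ℝ)) * (x/2) ^ ((μ-1) + 2*(k:ℝ)) /
        ((Nat.factorial k : ℝ) * Real.Gamma (μ + (k:ℝ) + 1))) x := by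
  set T : Set ℝ := Ioo (x/2) (2*x) with hT
  have hxT : x ∈ T := by constructor <;> [linarith; linarith]
  have hTo : IsOpen T := isOpen_Ioo
  have hTc : IsPreconnected T := (convex_Ioo _ _).isPreconnected
  set Dmax : ℝ := max ((x/4)^(μ-1)) (x^(μ-1)) with hD
  have hDpos : 0 < Dmax := lt_max_of_lt_right (Real.rpow_pos_of_pos hx _)
  set u : ℕ → ℝ := fun k => ((|μ|/2+1)*Dmax) * (((k:ℝ)+1) * (x^2)^k /
      ((Nat.factorial k : ℝ) * Real.Gamma (μ + (k:ℝ) + 1))) with hu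
  have hus : Summable u := (summableAux μ (x^2) hμ (by positivity)).mul_left _
  have key := hasDerivAt_tsum_of_isPreconnected hus hTo hTc
    (g := fun (k : ℕ) (y : ℝ) => (y/2) ^ (μ + 2*(k:ℝ)) / ((Nat.factorial k : ℝ) * Real.Gamma (μ + (k:ℝ) + 1)))
    (g' := fun (k : ℕ) (y : ℝ) => (μ/2 + (k:ℝ)) * (y/2) ^ ((μ-1) + 2*(k:ℝ)) /
      ((Nat.factorial k : ℝ) * Real.Gamma (μ + (k:ℝ) + 1)))
    (y₀ := x) (y := x) ?_ ?_ hxT ?_ hxT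
  · exact key
  · -- each term differentiable
    intro k y hy
    have hy0 : 0 < y := lt_trans (by linarith : (0:ℝ) < x/2) hy.1
    have h2 : y/2 ≠ 0 := by positivity
    have h1 : HasDerivAt (fun y : ℝ => y/2) (1/2) y := (hasDerivAt_id y).div_const 2
    have h3 := (Real.hasDerivAt_rpow_const (p := μ + 2*(k:ℝ)) (Or.inl h2)).comp y h1
    have h4 := h3.div_const ((Nat.factorial k : ℝ) * Real.Gamma (μ + (k:ℝ) + 1))
    have he : μ + 2*(k:ℝ) - 1 = (μ-1) + 2*(k:ℝ) := by ring
    have heq : (μ + 2*(k:ℝ)) * (y/2)^(μ + 2*(k:ℝ) - 1) * (1/2) / ((Nat.factorial k : ℝ) * Real.Gamma (μ + (k:ℝ) + 1)) = (μ/2 + (k:ℝ)) * (y/2) ^ ((μ-1) + 2*(k:ℝ)) / ((Nat.factorial k : ℝ) * Real.Gamma (μ + (k:ℝ) + 1)) := by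
      rw [he]; ring
    rw [heq] at h4
    exact h4
  · -- bounds
    intro k y hy
    have hy0 : 0 < y := lt_trans (by linarith : (0:ℝ) < x/2) hy.1
    have hy2 : 0 < y/2 := by linarith
    have hg : 0 < Real.Gamma (μ + (k:ℝ) + 1) := gamma_pos μ hμ k
    have hfk : (0:ℝ) < (Nat.factorial k : ℝ) := by exact_mod_cast Nat.factorial_pos k
    rw [Real.norm_eq_abs, abs_div, abs_of_pos (mul_pos hfk hg), abs_mul,
      abs_of_pos (Real.rpow_pos_of_pos hy2 _), rpow_split _ _ hy2, hu]
    have hb1 : (y/2)^(μ-1) ≤ Dmax := by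
      rcases le_or_gt 0 (μ-1) with h | h
      · refine le_trans (Real.rpow_le_rpow hy2.le ?_ h) (le_max_right _ _)
        linarith [hy.2]
      · refine le_trans (Real.rpow_le_rpow_of_nonpos (by linarith : (0:ℝ) < x/4) ?_ h.le)
          (le_max_left _ _)
        linarith [hy.1]
    have hb2 : ((y/2)^2)^k ≤ (x^2)^k := by
      apply pow_le_pow_left₀ (by positivity)
      nlinarith [hy.2, hy0]
    have hb3 : |μ/2 + (k:ℝ)| ≤ (|μ|/2+1) * ((k:ℝ)+1) := by
      have hk : (0:ℝ) ≤ k := Nat.cast_nonneg k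
      have := abs_add_le (μ/2) (k:ℝ)
      rw [abs_div] at this
      simp only [Nat.abs_cast] at this
      have h2 : |(2:ℝ)| = 2 := by norm_num
      rw [h2] at this
      nlinarith [abs_nonneg μ]
    calc |μ/2 + (k:ℝ)| * ((y/2)^(μ-1) * ((y/2)^2)^k) / ((Nat.factorial k : ℝ) * Real.Gamma (μ + (k:ℝ) + 1))
        ≤ ((|μ|/2+1) * ((k:ℝ)+1)) * (Dmax * (x^2)^k) / ((Nat.factorial k : ℝ) * Real.Gamma (μ + (k:ℝ) + 1)) := by
          gcongr
      _ = ((|μ|/2+1)*Dmax) * (((k:ℝ)+1) * (x^2)^k / ((Nat.factorial k : ℝ) * Real.Gamma (μ + (k:ℝ) + 1))) := by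
          ring
  · exact summable_term μ x hμ hx

lemma hasDerivAt_besselI_add (μ x : ℝ) (hμ : -(1/2:ℝ) ≤ μ) (hx : 0 < x) :
    HasDerivAt (besselI μ) (besselI (μ+1) x + (μ/x) * besselI μ x) x := by
  have hx2 : (0:ℝ) < x/2 := by linarith
  have raw := hasDerivAt_besselI_raw μ x hμ hx
  have hsum_e : Summable (fun k : ℕ => (0 + 1*(k:ℝ)) * (x/2) ^ ((μ-1) + 2*(k:ℝ)) /
      ((Nat.factorial k : ℝ) * Real.Gamma (μ + (k:ℝ) + 1))) := summable_coef μ x 0 1 (μ-1) hμ hx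
  have hsum_t : Summable (fun k : ℕ => (μ/x) * ((x/2) ^ (μ + 2*(k:ℝ)) /
      ((Nat.factorial k : ℝ) * Real.Gamma (μ + (k:ℝ) + 1)))) := (summable_term μ x hμ hx).mul_left _
  have hpt : ∀ k : ℕ, (μ/2 + (k:ℝ)) * (x/2) ^ ((μ-1) + 2*(k:ℝ)) /
      ((Nat.factorial k : ℝ) * Real.Gamma (μ + (k:ℝ) + 1)) =
      (μ/x) * ((x/2) ^ (μ + 2*(k:ℝ)) / ((Nat.factorial k : ℝ) * Real.Gamma (μ + (k:ℝ) + 1))) +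
      (0 + 1*(k:ℝ)) * (x/2) ^ ((μ-1) + 2*(k:ℝ)) / ((Nat.factorial k : ℝ) * Real.Gamma (μ + (k:ℝ) + 1)) := by
    intro k
    have hgk := gamma_pos μ hμ k
    have hfk : (0:ℝ) < (Nat.factorial k : ℝ) := by exact_mod_cast Nat.factorial_pos k
    have hsplit : (x/2) ^ (μ + 2*(k:ℝ)) = (x/2) * (x/2) ^ ((μ-1) + 2*(k:ℝ)) := by
      rw [show μ + 2*(k:ℝ) = 1 + ((μ-1) + 2*(k:ℝ)) by ring, Real.rpow_add hx2, Real.rpow_one]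
    rw [hsplit]
    field_simp
    ring
  have hval : (∑' k : ℕ, (μ/2 + (k:ℝ)) * (x/2) ^ ((μ-1) + 2*(k:ℝ)) /
      ((Nat.factorial k : ℝ) * Real.Gamma (μ + (k:ℝ) + 1))) =
      besselI (μ+1) x + (μ/x) * besselI μ x := by
    rw [tsum_congr hpt, Summable.tsum_add hsum_t hsum_e, tsum_mul_left]
    rw [add_comm]
    congr 1
    · -- ∑ e = besselI (μ+1) x
      rw [Summable.tsum_eq_zero_add hsum_e]
      simp only [Nat.cast_zero, mul_zero, zero_add, one_mul, zero_mul, zero_div, Nat.cast_succ]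
      rw [besselI]
      apply tsum_congr
      intro k
      have h1 : (μ-1) + 2*((k:ℝ)+1) = (μ+1) + 2*(k:ℝ) := by ring
      have h2 : μ + ((k:ℝ)+1) + 1 = (μ+1) + (k:ℝ) + 1 := by ring
      have h3 : ((Nat.factorial (k+1) : ℝ)) = ((k:ℝ)+1) * (Nat.factorial k : ℝ) := by
        push_cast [Nat.factorial_succ]; ring
      rw [h1, h2, h3]
      have hfk : (0:ℝ) < (Nat.factorial k : ℝ) := by exact_mod_cast Nat.factorial_pos k
      have hg := gamma_pos (μ+1) (by linarith) k
      field_simp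
  rw [hval] at raw
  exact raw

lemma hasDerivAt_besselI_sub (ν x : ℝ) (hν : (1/2:ℝ) ≤ ν) (hx : 0 < x) :
    HasDerivAt (besselI ν) (besselI (ν-1) x - (ν/x) * besselI ν x) x := by
  have hν' : -(1/2:ℝ) ≤ ν := by linarith
  have hν1 : -(1/2:ℝ) ≤ ν - 1 := by linarith
  have hx2 : (0:ℝ) < x/2 := by linarith
  have raw := hasDerivAt_besselI_raw ν x hν' hx
  have hsum_t1 : Summable (fun k : ℕ => (x/2) ^ ((ν-1) + 2*(k:ℝ)) /
      ((Nat.factorial k : ℝ) * Real.Gamma ((ν-1) + (k:ℝ) + 1))) := summable_term (ν-1) x hν1 hx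
  have hsum_t2 : Summable (fun k : ℕ => (ν/x) * ((x/2) ^ (ν + 2*(k:ℝ)) /
      ((Nat.factorial k : ℝ) * Real.Gamma (ν + (k:ℝ) + 1)))) := (summable_term ν x hν' hx).mul_left _
  have hpt : ∀ k : ℕ, (ν/2 + (k:ℝ)) * (x/2) ^ ((ν-1) + 2*(k:ℝ)) /
      ((Nat.factorial k : ℝ) * Real.Gamma (ν + (k:ℝ) + 1)) =
      (x/2) ^ ((ν-1) + 2*(k:ℝ)) / ((Nat.factorial k : ℝ) * Real.Gamma ((ν-1) + (k:ℝ) + 1)) -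
      (ν/x) * ((x/2) ^ (ν + 2*(k:ℝ)) / ((Nat.factorial k : ℝ) * Real.Gamma (ν + (k:ℝ) + 1))) := by
    intro k
    have hfk : (0:ℝ) < (Nat.factorial k : ℝ) := by exact_mod_cast Nat.factorial_pos k
    have hg1 : 0 < Real.Gamma ((ν-1) + (k:ℝ) + 1) := gamma_pos (ν-1) hν1 k
    have harg : (0:ℝ) < ν + (k:ℝ) := by have : (0:ℝ) ≤ k := Nat.cast_nonneg k; linarith
    have hgrec : Real.Gamma (ν + (k:ℝ) + 1) = (ν + (k:ℝ)) * Real.Gamma ((ν-1) + (k:ℝ) + 1) := by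
      rw [show ν + (k:ℝ) + 1 = (ν + (k:ℝ)) + 1 by ring, Real.Gamma_add_one (ne_of_gt harg)]
      congr 1
      ring
    have hsplit : (x/2) ^ (ν + 2*(k:ℝ)) = (x/2) * (x/2) ^ ((ν-1) + 2*(k:ℝ)) := by
      rw [show ν + 2*(k:ℝ) = 1 + ((ν-1) + 2*(k:ℝ)) by ring, Real.rpow_add hx2, Real.rpow_one]
    rw [hsplit, hgrec]
    have hg2 : 0 < Real.Gamma (ν + (k:ℝ)) := by
      have := hgrec
      rw [show ν + (k:ℝ) + 1 = (ν + (k:ℝ)) + 1 by ring] at this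
      exact Real.Gamma_pos_of_pos harg
    field_simp
    ring
  have hval : (∑' k : ℕ, (ν/2 + (k:ℝ)) * (x/2) ^ ((ν-1) + 2*(k:ℝ)) /
      ((Nat.factorial k : ℝ) * Real.Gamma (ν + (k:ℝ) + 1))) =
      besselI (ν-1) x - (ν/x) * besselI ν x := by
    rw [tsum_congr hpt, Summable.tsum_sub hsum_t1 hsum_t2, tsum_mul_left]
    rw [besselI, besselI]
  rw [hval] at raw
  exact raw

lemma hasDerivAt_besselRatio (ν x : ℝ) (hν : (1/2:ℝ) ≤ ν) (hx : 0 < x) :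
    HasDerivAt (besselRatio ν)
      (1 - ((2*ν-1)/x) * besselRatio ν x - (besselRatio ν x)^2) x := by
  have hν1 : -(1/2:ℝ) ≤ ν - 1 := by linarith
  have hd : 0 < besselI (ν-1) x := besselI_pos (ν-1) x hν1 hx
  have hn := hasDerivAt_besselI_sub ν x hν hx
  have hdenom := hasDerivAt_besselI_add (ν-1) x hν1 hx
  rw [show ν - 1 + 1 = ν by ring] at hdenom
  have hdiv := hn.div hdenom (ne_of_gt hd)
  have hfun : (fun y => besselI ν y / besselI (ν-1) y) = besselRatio ν := by
    funext y; rw [besselRatio]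
  rw [show besselI ν / besselI (ν-1) = besselRatio ν from hfun] at hdiv
  refine hdiv.congr_deriv ?_
  rw [besselRatio]
  have hx' : x ≠ 0 := ne_of_gt hx
  field_simp
  ring

/-- if `ν ≥ 1/2` and `0 < a ≤ 1`, then the noncentral chi density
`f(t) = (t^ν/a^(ν-1)) exp(-(t²+a²)/2) I_{ν-1}(at)` is log-concave on `(0, ∞)`;
in fact `(log f)''(t) ≤ a² - 1 ≤ 0` for all `t > 0`. -/
theorem noncentral_chi_density_logConcave_of_a_le_one (ν a : ℝ)
    (hν : 1 / 2 ≤ ν) (ha : 0 < a) (ha1 : a ≤ 1)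
    (f : ℝ → ℝ)
    (hf : ∀ t : ℝ, f t = t ^ ν / a ^ (ν - 1) * Real.exp (-(t ^ 2 + a ^ 2) / 2) *
      besselI (ν - 1) (a * t)) :
    ConcaveOn ℝ (Set.Ioi 0) (fun t => Real.log (f t)) ∧
    (∀ t : ℝ, 0 < t → deriv (deriv (fun s => Real.log (f s))) t ≤ a ^ 2 - 1) ∧
    a ^ 2 - 1 ≤ 0 := by
  have hν1 : -(1/2:ℝ) ≤ ν - 1 := by linarith
  set g : ℝ → ℝ := fun s => Real.log (f s) with hg
  set G : ℝ → ℝ := fun t => (2*ν-1)/t - t + a * besselRatio ν (a*t) with hG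
  have hIpos : ∀ s : ℝ, 0 < s → 0 < besselI (ν-1) (a*s) :=
    fun s hs => besselI_pos (ν-1) (a*s) hν1 (mul_pos ha hs)
  -- first derivative
  have hDg : ∀ t : ℝ, 0 < t → HasDerivAt g (G t) t := by
    intro t ht
    set φ : ℝ → ℝ := fun s => ν * Real.log s - (ν-1) * Real.log a - (s^2 + a^2)/2 +
      Real.log (besselI (ν-1) (a*s)) with hφ
    have hgφ : g =ᶠ[nhds t] φ := by
      filter_upwards [Ioi_mem_nhds ht] with s hs
      have hs0 : (0:ℝ) < s := hs
      have h1 : (0:ℝ) < s ^ ν := Real.rpow_pos_of_pos hs0 ν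
      have h2 : (0:ℝ) < a ^ (ν-1) := Real.rpow_pos_of_pos ha (ν-1)
      have h3 : (0:ℝ) < Real.exp (-(s ^ 2 + a ^ 2) / 2) := Real.exp_pos _
      have h4 := hIpos s hs0
      show Real.log (f s) = ν * Real.log s - (ν-1) * Real.log a - (s^2 + a^2)/2 +
        Real.log (besselI (ν-1) (a*s))
      rw [hf s]
      rw [Real.log_mul (by positivity) (ne_of_gt h4), Real.log_mul (by positivity) (ne_of_gt h3),
        Real.log_div (ne_of_gt h1) (ne_of_gt h2), Real.log_rpow hs0, Real.log_rpow ha,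
        Real.log_exp]
      ring
    have hlin : HasDerivAt (fun s : ℝ => a * s) a t := by
      simpa using (hasDerivAt_id t).const_mul a
    have hb := (hasDerivAt_besselI_add (ν-1) (a*t) hν1 (mul_pos ha ht)).comp t hlin
    rw [show ν - 1 + 1 = ν by ring] at hb
    have hlog := (Real.hasDerivAt_log (ne_of_gt (hIpos t ht))).comp t hb
    have h1 : HasDerivAt (fun s : ℝ => ν * Real.log s) (ν * t⁻¹) t :=
      (Real.hasDerivAt_log (ne_of_gt ht)).const_mul ν
    have h2 : HasDerivAt (fun s : ℝ => (s^2 + a^2)/2) t t := by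
      have := ((hasDerivAt_pow 2 t).add_const (a^2)).div_const 2
      exact this.congr_deriv (by norm_num)
    have hφ' : HasDerivAt φ (ν * t⁻¹ - t +
        (besselI (ν-1) (a*t))⁻¹ * ((besselI ν (a*t) + ((ν-1)/(a*t)) * besselI (ν-1) (a*t)) * a)) t := by
      exact ((h1.sub_const ((ν-1) * Real.log a)).sub h2).add hlog
    have hval : ν * t⁻¹ - t +
        (besselI (ν-1) (a*t))⁻¹ * ((besselI ν (a*t) + ((ν-1)/(a*t)) * besselI (ν-1) (a*t)) * a) = G t := by
      rw [hG]
      simp only [besselRatio]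
      have h4 := hIpos t ht
      have h5 : besselI (ν-1) (t*a) ≠ 0 := by rw [mul_comm]; exact h4.ne'
      field_simp
      ring
    rw [hval] at hφ'
    exact hφ'.congr_of_eventuallyEq hgφ
  -- second derivative of G
  have hDG : ∀ t : ℝ, 0 < t → HasDerivAt G
      (a^2 - 1 - (2*ν-1)/t^2 - a^2 * ((2*ν-1)/(a*t)) * besselRatio ν (a*t)
        - a^2 * (besselRatio ν (a*t))^2) t := by
    intro t ht
    have hlin : HasDerivAt (fun s : ℝ => a * s) a t := by
      simpa using (hasDerivAt_id t).const_mul a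
    have hr := (hasDerivAt_besselRatio ν (a*t) hν (mul_pos ha ht)).comp t hlin
    have h1 : HasDerivAt (fun s : ℝ => (2*ν-1)/s) (-((2*ν-1)/t^2)) t := by
      have := (hasDerivAt_const t (2*ν-1)).div (hasDerivAt_id t) (ne_of_gt ht)
      exact this.congr_deriv (by simp; ring)
    have hfull : HasDerivAt G (-((2*ν-1)/t^2) - 1 +
        a * ((1 - ((2*ν-1)/(a*t)) * besselRatio ν (a*t) - (besselRatio ν (a*t))^2) * a)) t :=
      (h1.sub (hasDerivAt_id t)).add (hr.const_mul a)
    convert hfull using 1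
    ring
  have habound : a^2 - 1 ≤ 0 := by nlinarith
  have hsecond : ∀ t : ℝ, 0 < t → deriv (deriv g) t ≤ a^2 - 1 := by
    intro t ht
    have heq : deriv g =ᶠ[nhds t] G := by
      filter_upwards [Ioi_mem_nhds ht] with s hs
      exact (hDg s hs).deriv
    rw [heq.deriv_eq, (hDG t ht).deriv]
    have hr0 : 0 ≤ besselRatio ν (a*t) := by
      apply div_nonneg (besselI_pos ν (a*t) (by linarith) (mul_pos ha ht)).le
      exact (hIpos t ht).le
    have hA1 : 0 ≤ (2*ν-1)/t^2 := by
      apply div_nonneg (by linarith) (by positivity)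
    have hA2 : 0 ≤ a^2 * ((2*ν-1)/(a*t)) * besselRatio ν (a*t) := by
      apply mul_nonneg (mul_nonneg (by positivity) _) hr0
      apply div_nonneg (by linarith) (by positivity)
    have hA3 : 0 ≤ a^2 * (besselRatio ν (a*t))^2 := by positivity
    linarith
  refine ⟨?_, hsecond, habound⟩
  -- concavity
  apply concaveOn_of_deriv2_nonpos (convex_Ioi 0)
  · intro t ht
    exact ((hDg t ht).continuousAt).continuousWithinAt
  · rw [interior_Ioi]
    intro t ht
    exact ((hDg t ht).differentiableAt).differentiableWithinAt
  · rw [interior_Ioi]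
    intro t ht
    have heq : deriv g =ᶠ[nhds t] G := by
      filter_upwards [Ioi_mem_nhds ht] with s hs
      exact (hDg s hs).deriv
    exact (((hDG t ht).differentiableAt).congr_of_eventuallyEq heq).differentiableWithinAt
  · rw [interior_Ioi]
    intro t ht
    have h2 : deriv^[2] g t = deriv (deriv g) t := by
      simp [Function.iterate_succ, Function.iterate_zero]
    rw [h2]
    exact le_trans (hsecond t ht) habound
end

section
/- For ν = 1/2, the second derivative of log f(t), where f(t) = (t^ν/a^{ν-1}) exp(-(t²+a²)/2) I_{ν-1}(at), tends to a² - 1 as t ↓ 0. Consequently, if a > 1 then f is not log-concave near 0. -/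
open Real Set Filter MeasureTheory

lemma gamma_half_aux (k : ℕ) :
    Real.Gamma ((k : ℝ) + 1 / 2) =
      Real.sqrt π * (Nat.factorial (2 * k)) / (4 ^ k * Nat.factorial k) := by
  induction k with
  | zero => norm_num [Real.Gamma_one_half_eq]
  | succ n ih =>
    have h : ((n + 1 : ℕ) : ℝ) + 1 / 2 = ((n : ℝ) + 1 / 2) + 1 := by push_cast; ring
    rw [h, Real.Gamma_add_one (by positivity), ih]
    have h1 : (Nat.factorial (2 * (n + 1)) : ℝ)
        = (2 * n + 2) * (2 * n + 1) * Nat.factorial (2 * n) := by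
      rw [show 2 * (n + 1) = (2 * n + 1) + 1 by ring, Nat.factorial_succ, Nat.factorial_succ]
      push_cast; ring
    have h2 : (Nat.factorial (n + 1) : ℝ) = (n + 1) * Nat.factorial n := by
      rw [Nat.factorial_succ]; push_cast; ring
    have h4 : (4 : ℝ) ^ (n + 1) = 4 * 4 ^ n := by ring
    have hfn : (0:ℝ) < Nat.factorial n := by positivity
    rw [h1, h2, h4]
    field_simp
    ring

lemma besselI_neg_half (x : ℝ) (hx : 0 < x) :
    besselI ((1 / 2 : ℝ) - 1) x = (x / 2) ^ (-(1 / 2) : ℝ) / Real.sqrt π * Real.cosh x := by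
  have hx2 : (0 : ℝ) < x / 2 := by linarith
  have hs := (Real.hasSum_cosh x).mul_left ((x / 2) ^ (-(1 / 2) : ℝ) / Real.sqrt π)
  rw [besselI, ← hs.tsum_eq]
  apply tsum_congr
  intro k
  have e1 : (1 / 2 : ℝ) - 1 + 2 * (k : ℝ) = ((2 * k : ℕ) : ℝ) + (-(1 / 2) : ℝ) := by
    push_cast; ring
  have e2 : (1 / 2 : ℝ) - 1 + (k : ℝ) + 1 = (k : ℝ) + 1 / 2 := by ring
  rw [e1, e2, Real.rpow_add hx2, Real.rpow_natCast, gamma_half_aux]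
  have hπ : (0 : ℝ) < Real.sqrt π := Real.sqrt_pos.2 Real.pi_pos
  have hfk : (0 : ℝ) < Nat.factorial k := by positivity
  have hf2k : (0 : ℝ) < Nat.factorial (2 * k) := by positivity
  have key : (x / 2) ^ (2 * k) * (4 : ℝ) ^ k = x ^ (2 * k) := by
    rw [div_pow, show (4 : ℝ) ^ k = 2 ^ (2 * k) by rw [pow_mul]; norm_num]
    field_simp
  have h24 : (2:ℝ) ^ (k * 2) = 4 ^ k := by rw [mul_comm, pow_mul]; norm_num
  field_simp
  have h12 : (1 / 2 : ℝ) ^ (k * 2) * 2 ^ (k * 2) = 1 := by rw [← mul_pow]; norm_num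
  linear_combination (-(x ^ (k * 2) * (1 / 2 : ℝ) ^ (k * 2))) * h24 + x ^ (k * 2) * h12

/-- for `ν = 1/2`, `(log f)''(t) → a² - 1` as `t ↓ 0`, where
`f(t) = (t^ν/a^(ν-1)) exp(-(t²+a²)/2) I_{ν-1}(at)`; consequently if `a > 1`
then `f` is not log-concave near `0`. -/
theorem log_deriv2_tendsto_and_not_logConcave (a : ℝ) (ha : 0 < a)
    (f : ℝ → ℝ)
    (hf : ∀ t : ℝ, f t = t ^ (1 / 2 : ℝ) / a ^ ((1 / 2 : ℝ) - 1) *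
      Real.exp (-(t ^ 2 + a ^ 2) / 2) * besselI ((1 / 2 : ℝ) - 1) (a * t)) :
    Filter.Tendsto (fun t => deriv (deriv (fun s => Real.log (f s))) t)
      (nhdsWithin 0 (Set.Ioi 0)) (nhds (a ^ 2 - 1)) ∧
    (1 < a → ∀ ε : ℝ, 0 < ε → ¬ ConcaveOn ℝ (Set.Ioo 0 ε) (fun t => Real.log (f t))) := by
  have hπ : (0:ℝ) < Real.sqrt π := Real.sqrt_pos.2 Real.pi_pos
  set c : ℝ := (2:ℝ) ^ (1/2:ℝ) / Real.sqrt π with hc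
  have hcpos : 0 < c := div_pos (Real.rpow_pos_of_pos two_pos _) hπ
  have hcosh : ∀ s : ℝ, (0:ℝ) < Real.cosh s := fun s => Real.cosh_pos s
  -- f on the positive axis
  have hfeq : ∀ t : ℝ, 0 < t →
      f t = c * (Real.exp (-(t ^ 2 + a ^ 2) / 2) * Real.cosh (a * t)) := by
    intro t ht
    have hat : 0 < a * t := mul_pos ha ht
    rw [hf, besselI_neg_half _ hat]
    have ha2 : a ^ ((1 / 2 : ℝ) - 1) = a ^ (1/2:ℝ) / a := by
      rw [Real.rpow_sub ha, Real.rpow_one]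
    have hsplit : (a * t / 2) ^ (-(1/2) : ℝ)
        = (a ^ (1/2:ℝ) * t ^ (1/2:ℝ) / 2 ^ (1/2:ℝ))⁻¹ := by
      rw [Real.rpow_neg (by positivity), Real.div_rpow (by positivity) (by norm_num),
        Real.mul_rpow ha.le ht.le]
    have haa : a ^ (1/2:ℝ) * a ^ (1/2:ℝ) = a := by rw [← Real.rpow_add ha]; norm_num
    have hap : (0:ℝ) < a ^ (1/2:ℝ) := Real.rpow_pos_of_pos ha _
    have htp : (0:ℝ) < t ^ (1/2:ℝ) := Real.rpow_pos_of_pos ht _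
    have h2p : (0:ℝ) < (2:ℝ) ^ (1/2:ℝ) := Real.rpow_pos_of_pos two_pos _
    rw [ha2, hsplit, hc]
    field_simp
    ring_nf
    linear_combination (-1 : ℝ) * haa
  -- the smooth model functions
  set g : ℝ → ℝ := fun t => Real.log c + (-(t^2+a^2)/2) + Real.log (Real.cosh (a*t)) with hg
  set g1 : ℝ → ℝ := fun t => -t + a * (Real.sinh (a*t) / Real.cosh (a*t)) with hg1
  set g2 : ℝ → ℝ := fun t => -1 + a^2 * (1 / Real.cosh (a*t)^2) with hg2
  have hlin : ∀ t : ℝ, HasDerivAt (fun t : ℝ => a * t) a t := by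
    intro t; simpa using (hasDerivAt_id t).const_mul a
  have hgderiv : ∀ t : ℝ, HasDerivAt g (g1 t) t := by
    intro t
    have h1 : HasDerivAt (fun t : ℝ => -(t^2+a^2)/2) (-t) t := by
      have := (((hasDerivAt_pow 2 t).add_const (a^2)).neg).div_const 2
      refine this.congr_deriv ?_
      simp; ring
    have hcd : HasDerivAt (fun t : ℝ => Real.cosh (a*t)) (Real.sinh (a*t) * a) t :=
      (Real.hasDerivAt_cosh (a*t)).comp t (hlin t)
    have h2 : HasDerivAt (fun t : ℝ => Real.log (Real.cosh (a*t)))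
        (Real.sinh (a*t) * a / Real.cosh (a*t)) t := hcd.log (hcosh _).ne'
    have := ((hasDerivAt_const t (Real.log c)).add h1).add h2
    refine this.congr_deriv ?_
    simp [hg1]; ring
  have hg1deriv : ∀ t : ℝ, HasDerivAt g1 (g2 t) t := by
    intro t
    have hs : HasDerivAt (fun t : ℝ => Real.sinh (a*t)) (Real.cosh (a*t) * a) t :=
      (Real.hasDerivAt_sinh (a*t)).comp t (hlin t)
    have hcd : HasDerivAt (fun t : ℝ => Real.cosh (a*t)) (Real.sinh (a*t) * a) t :=
      (Real.hasDerivAt_cosh (a*t)).comp t (hlin t)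
    have hq := hs.div hcd (hcosh (a*t)).ne'
    have := (hasDerivAt_id t).neg.add (hq.const_mul a)
    refine this.congr_deriv ?_
    have h1 := Real.cosh_sq_sub_sinh_sq (a*t)
    simp only [hg2]
    field_simp
    nlinarith [h1]
  -- log f = g on Ioi 0
  have hlog : ∀ t : ℝ, t ∈ Ioi (0:ℝ) → Real.log (f t) = g t := by
    intro t ht
    rw [hfeq t ht, Real.log_mul hcpos.ne' (by positivity),
      Real.log_mul (Real.exp_ne_zero _) (hcosh _).ne', Real.log_exp, hg]
    ring
  have hD1 : ∀ t : ℝ, t ∈ Ioi (0:ℝ) → deriv (fun s => Real.log (f s)) t = g1 t := by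
    intro t ht
    have hev : (fun s => Real.log (f s)) =ᶠ[nhds t] g :=
      eventually_of_mem (isOpen_Ioi.mem_nhds ht) hlog
    rw [hev.deriv_eq, (hgderiv t).deriv]
  have hD2 : ∀ t : ℝ, t ∈ Ioi (0:ℝ) → deriv (deriv (fun s => Real.log (f s))) t = g2 t := by
    intro t ht
    have hev : deriv (fun s => Real.log (f s)) =ᶠ[nhds t] g1 :=
      eventually_of_mem (isOpen_Ioi.mem_nhds ht) hD1
    rw [hev.deriv_eq, (hg1deriv t).deriv]
  have hg2cont : Continuous g2 := by
    rw [hg2]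
    fun_prop (disch := intro x; positivity)
  have hg20 : g2 0 = a ^ 2 - 1 := by simp [hg2]; ring
  constructor
  · have htend : Tendsto g2 (nhdsWithin 0 (Ioi 0)) (nhds (a^2 - 1)) := by
      rw [← hg20]
      exact (hg2cont.tendsto 0).mono_left nhdsWithin_le_nhds
    refine htend.congr' ?_
    filter_upwards [self_mem_nhdsWithin] with t ht
    exact (hD2 t ht).symm
  · intro ha1 ε hε hcon
    have h0 : 0 < g2 0 := by rw [hg20]; nlinarith
    have hev : ∀ᶠ t in nhds (0:ℝ), 0 < g2 t :=
      (hg2cont.tendsto 0).eventually (eventually_gt_nhds h0)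
    obtain ⟨δ, hδ, hball⟩ := Metric.eventually_nhds_iff.mp hev
    set m := min δ ε with hm
    have hmpos : 0 < m := lt_min hδ hε
    have hsub : Ioo (0:ℝ) m ⊆ Ioo 0 ε := Ioo_subset_Ioo le_rfl (min_le_right _ _)
    -- g strictly convex on Ioo 0 m
    have hgc : Continuous g := by
      rw [hg]
      fun_prop (disch := intro x; positivity)
    have hsc : StrictConvexOn ℝ (Ioo (0:ℝ) m) g := by
      apply strictConvexOn_of_deriv2_pos (convex_Ioo _ _) hgc.continuousOn
      intro x hx
      rw [interior_Ioo] at hx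
      have hxd : dist x 0 < δ := by
        rw [Real.dist_eq, sub_zero, abs_of_pos hx.1]
        exact lt_of_lt_of_le hx.2 (min_le_left _ _)
      have : deriv^[2] g x = g2 x := by
        have hdg : deriv g = g1 := funext fun t => (hgderiv t).deriv
        show deriv (deriv g) x = g2 x
        rw [hdg, (hg1deriv x).deriv]
      rw [this]
      exact hball hxd
    -- concavity of log f transfers to g
    have hcon' : ConcaveOn ℝ (Ioo (0:ℝ) m) g := by
      have h1 : ConcaveOn ℝ (Ioo (0:ℝ) m) (fun t => Real.log (f t)) :=
        hcon.subset hsub (convex_Ioo _ _)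
      constructor
      · exact convex_Ioo _ _
      · intro x hx y hy p q hp hq hpq
        have e1 : Real.log (f x) = g x := hlog x hx.1
        have e2 : Real.log (f y) = g y := hlog y hy.1
        have hz : p • x + q • y ∈ Ioo (0:ℝ) m := (convex_Ioo _ _) hx hy hp hq hpq
        have e3 : Real.log (f (p • x + q • y)) = g (p • x + q • y) := hlog _ hz.1
        have := h1.2 hx hy hp hq hpq
        dsimp only at this
        rw [e1, e2, e3] at this
        exact this
    -- contradiction at three points
    have hx : m/3 ∈ Ioo (0:ℝ) m := ⟨by linarith, by linarith⟩
    have hy : 2*m/3 ∈ Ioo (0:ℝ) m := ⟨by linarith, by linarith⟩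
    have hne : m/3 ≠ 2*m/3 := by intro h; nlinarith
    have h1 := hsc.2 hx hy hne one_half_pos one_half_pos (by norm_num)
    have h2 := hcon'.2 hx hy (by norm_num : (0:ℝ) ≤ 1/2) (by norm_num : (0:ℝ) ≤ 1/2)
      (by norm_num)
    simp only [smul_eq_mul] at h1 h2
    linarith
end

section
/- Fix ν > 0 and define h_ν(t) = 1 - (2ν-1)/t² - ((2ν-1)/t) r_ν(t) - r_ν(t)² for t > 0, where r_ν(t) = I_ν(t)/I_{ν-1}(t). Then the function f_a(t) = (t^ν/a^{ν-1}) exp(-(t²+a²)/2) I_{ν-1}(at) is log-concave on (0, ∞) for every a > 0 if and only if h_ν(t) ≤ 0 for all t > 0. -/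
open Real Set Filter MeasureTheory
open Topology

namespace BesselProofAux

/-- The entire part of the Bessel series. -/
noncomputable def Sb (μ x : ℝ) : ℝ :=
  ∑' k : ℕ, x ^ k / ((Nat.factorial k : ℝ) * Real.Gamma (μ + (k : ℝ) + 1))

lemma gammaArg_pos {μ : ℝ} (hμ : -1 < μ) (k : ℕ) : (0:ℝ) < μ + (k:ℝ) + 1 := by
  have : (0:ℝ) ≤ (k:ℝ) := Nat.cast_nonneg k
  linarith

lemma gamma_pos {μ : ℝ} (hμ : -1 < μ) (k : ℕ) : 0 < Real.Gamma (μ + (k:ℝ) + 1) :=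
  Real.Gamma_pos_of_pos (gammaArg_pos hμ k)

noncomputable def cmin (μ : ℝ) : ℝ := min (Real.Gamma (μ+1)) (Real.Gamma (μ+2))

lemma cmin_pos {μ : ℝ} (hμ : -1 < μ) : 0 < cmin μ :=
  lt_min (Real.Gamma_pos_of_pos (by linarith)) (Real.Gamma_pos_of_pos (by linarith))

lemma cmin_le {μ : ℝ} (hμ : -1 < μ) (k : ℕ) : cmin μ ≤ Real.Gamma (μ + (k:ℝ) + 1) := by
  induction k with
  | zero =>
    simp only [Nat.cast_zero, add_zero]
    exact min_le_left _ _
  | succ n ih =>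
    rcases Nat.eq_zero_or_pos n with rfl | hn
    · have : μ + ((1:ℕ):ℝ) + 1 = μ + 2 := by push_cast; ring
      rw [this]; exact min_le_right _ _
    · have h1 : (1:ℝ) ≤ (n:ℝ) := by exact_mod_cast hn
      have hne : μ + (n:ℝ) + 1 ≠ 0 := by linarith
      have hG : Real.Gamma (μ + ((n+1:ℕ):ℝ) + 1)
          = (μ + (n:ℝ) + 1) * Real.Gamma (μ + (n:ℝ) + 1) := by
        rw [show μ + ((n+1:ℕ):ℝ) + 1 = (μ + (n:ℝ) + 1) + 1 by push_cast; ring,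
          Real.Gamma_add_one hne]
      rw [hG]
      nlinarith [gamma_pos hμ n]

lemma summable_Sb {μ : ℝ} (hμ : -1 < μ) (x : ℝ) :
    Summable (fun k : ℕ => x ^ k / ((Nat.factorial k : ℝ) * Real.Gamma (μ + (k:ℝ) + 1))) := by
  have hc := cmin_pos hμ
  apply Summable.of_norm_bounded
    (g := fun k : ℕ => (cmin μ)⁻¹ * (|x| ^ k / (Nat.factorial k : ℝ)))
    ((Real.summable_pow_div_factorial |x|).mul_left _)
  intro k
  have hg := gamma_pos hμ k
  have hfac : (0:ℝ) < (Nat.factorial k : ℝ) := by positivity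
  have h1 : ‖x ^ k / ((Nat.factorial k : ℝ) * Real.Gamma (μ + (k:ℝ) + 1))‖
      = |x| ^ k / ((Nat.factorial k : ℝ) * Real.Gamma (μ + (k:ℝ) + 1)) := by
    rw [Real.norm_eq_abs, abs_div, abs_pow, abs_of_pos (mul_pos hfac hg)]
  rw [h1]
  have h2 : |x| ^ k / ((Nat.factorial k : ℝ) * Real.Gamma (μ + (k:ℝ) + 1))
      ≤ |x| ^ k / ((Nat.factorial k : ℝ) * cmin μ) := by
    apply div_le_div_of_nonneg_left (by positivity) (by positivity)
    exact mul_le_mul_of_nonneg_left (cmin_le hμ k) hfac.le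
  refine h2.trans (le_of_eq ?_)
  rw [inv_mul_eq_div, div_div]

lemma Sb_pos {μ : ℝ} (hμ : -1 < μ) {x : ℝ} (hx : 0 ≤ x) : 0 < Sb μ x := by
  refine Summable.tsum_pos (summable_Sb hμ x) (fun k => ?_) 0 ?_
  · have := gamma_pos hμ k
    positivity
  · have := gamma_pos hμ 0
    simp only [pow_zero, Nat.factorial_zero, Nat.cast_one, one_mul, Nat.cast_zero] at this ⊢
    positivity

lemma hasDerivAt_Sb {μ : ℝ} (hμ : -1 < μ) (x : ℝ) :
    HasDerivAt (Sb μ) (Sb (μ+1) x) x := by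
  have hc := cmin_pos hμ
  set R : ℝ := |x| + 1 with hR
  have hRpos : 0 < R := by positivity
  have hxR : x ∈ Set.Ioo (-R) R := by
    constructor <;> cases abs_cases x <;> simp [hR] <;> linarith [abs_nonneg x]
  set g : ℕ → ℝ → ℝ :=
    fun k y => y ^ k / ((Nat.factorial k : ℝ) * Real.Gamma (μ + (k:ℝ) + 1)) with hg_def
  set g' : ℕ → ℝ → ℝ :=
    fun k y => ((k:ℝ) * y ^ (k-1)) / ((Nat.factorial k : ℝ) * Real.Gamma (μ + (k:ℝ) + 1))
    with hg'_def
  set u : ℕ → ℝ := fun k => ((k:ℝ) * R ^ (k-1)) / ((Nat.factorial k : ℝ) * cmin μ) with hu_def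
  have hu : Summable u := by
    rw [← summable_nat_add_iff 1]
    have he : (fun k : ℕ => u (k+1)) = fun k : ℕ => (cmin μ)⁻¹ * (R ^ k / (Nat.factorial k : ℝ)) := by
      funext k
      have hfac : ((k:ℝ)+1) * (Nat.factorial k : ℝ) ≠ 0 := by positivity
      simp only [hu_def, Nat.add_sub_cancel, Nat.factorial_succ]
      push_cast
      field_simp
    rw [he]
    exact (Real.summable_pow_div_factorial R).mul_left _
  have hg : ∀ (k : ℕ) (y : ℝ), y ∈ Set.Ioo (-R) R → HasDerivAt (g k) (g' k y) y := by
    intro k y _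
    exact (hasDerivAt_pow k y).div_const _
  have hg' : ∀ (k : ℕ) (y : ℝ), y ∈ Set.Ioo (-R) R → ‖g' k y‖ ≤ u k := by
    intro k y hy
    have hyR : |y| ≤ R := by
      rw [abs_le]; exact ⟨hy.1.le, hy.2.le⟩
    have hgam := gamma_pos hμ k
    have hfac : (0:ℝ) < (Nat.factorial k : ℝ) := by positivity
    have hnum : |(k:ℝ) * y ^ (k-1)| ≤ (k:ℝ) * R ^ (k-1) := by
      rw [abs_mul, abs_pow, Nat.abs_cast]
      exact mul_le_mul_of_nonneg_left (pow_le_pow_left₀ (abs_nonneg y) hyR _) (Nat.cast_nonneg k)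
    have hden : (Nat.factorial k : ℝ) * cmin μ ≤ (Nat.factorial k : ℝ) * Real.Gamma (μ + (k:ℝ) + 1) :=
      mul_le_mul_of_nonneg_left (cmin_le hμ k) hfac.le
    rw [hg'_def, Real.norm_eq_abs, abs_div, abs_of_pos (mul_pos hfac hgam)]
    exact div_le_div₀ (by positivity) hnum (by positivity) hden
  have hsum0 : Summable (fun k => g k 0) := summable_Sb hμ 0
  have hkey := hasDerivAt_tsum_of_isPreconnected hu isOpen_Ioo
    (convex_Ioo (-R) R).isPreconnected hg hg'
    (Set.mem_Ioo.mpr ⟨by linarith, hRpos⟩) hsum0 hxR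
  have hder : HasDerivAt (Sb μ) (∑' k, g' k x) x := hkey
  have hsum' : Summable (fun k => g' k x) :=
    Summable.of_norm_bounded hu (fun k => hg' k x hxR)
  have hval : (∑' k, g' k x) = Sb (μ+1) x := by
    rw [Summable.tsum_eq_zero_add hsum']
    have h0 : g' 0 x = 0 := by simp [hg'_def]
    rw [h0, zero_add]
    unfold Sb
    apply tsum_congr
    intro k
    have hgam := gamma_pos hμ (k+1)
    have hfac : (0:ℝ) < (Nat.factorial k : ℝ) := by positivity
    have harg : μ + ((k+1:ℕ):ℝ) + 1 = (μ + 1) + (k:ℝ) + 1 := by push_cast; ring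
    simp only [hg'_def, Nat.add_sub_cancel, Nat.factorial_succ, harg]
    have hgam' : Real.Gamma ((μ+1) + (k:ℝ) + 1) ≠ 0 := by
      rw [← harg]; exact hgam.ne'
    push_cast
    field_simp
  rwa [hval] at hder

lemma Sb_rec {μ : ℝ} (hμ : -1 < μ) (x : ℝ) :
    Sb μ x = (μ+1) * Sb (μ+1) x + x * Sb (μ+2) x := by
  have hμ1 : -1 < μ + 1 := by linarith
  have hμ2 : -1 < μ + 2 := by linarith
  have hsub : Sb μ x - (μ+1) * Sb (μ+1) x
      = ∑' k : ℕ, ((k:ℝ) * x ^ k) / ((Nat.factorial k : ℝ) * Real.Gamma (μ + (k:ℝ) + 2)) := by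
    unfold Sb
    rw [← tsum_mul_left, ← Summable.tsum_sub (summable_Sb hμ x) ((summable_Sb hμ1 x).mul_left _)]
    apply tsum_congr
    intro k
    have hgam := gamma_pos hμ k
    have hfac : (0:ℝ) < (Nat.factorial k : ℝ) := by positivity
    have harg : (μ+1) + (k:ℝ) + 1 = (μ + (k:ℝ) + 1) + 1 := by ring
    have harg2 : μ + (k:ℝ) + 2 = (μ + (k:ℝ) + 1) + 1 := by ring
    have hc : μ + (k:ℝ) + 1 ≠ 0 := (gammaArg_pos hμ k).ne'
    rw [harg, harg2, Real.Gamma_add_one hc]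
    field_simp
    ring
  have hterm : ∀ k : ℕ, Sb μ x - (μ+1) * Sb (μ+1) x
      = Sb μ x - (μ+1) * Sb (μ+1) x := fun _ => rfl
  have hsumd : Summable (fun k : ℕ =>
      ((k:ℝ) * x ^ k) / ((Nat.factorial k : ℝ) * Real.Gamma (μ + (k:ℝ) + 2))) := by
    apply Summable.congr ((summable_Sb hμ x).sub ((summable_Sb hμ1 x).mul_left (μ+1)))
    intro k
    have hgam := gamma_pos hμ k
    have hfac : (0:ℝ) < (Nat.factorial k : ℝ) := by positivity
    have harg : (μ+1) + (k:ℝ) + 1 = (μ + (k:ℝ) + 1) + 1 := by ring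
    have harg2 : μ + (k:ℝ) + 2 = (μ + (k:ℝ) + 1) + 1 := by ring
    have hc : μ + (k:ℝ) + 1 ≠ 0 := (gammaArg_pos hμ k).ne'
    rw [harg, harg2, Real.Gamma_add_one hc]
    field_simp
    ring
  have hshift : (∑' k : ℕ, ((k:ℝ) * x ^ k) / ((Nat.factorial k : ℝ) * Real.Gamma (μ + (k:ℝ) + 2)))
      = x * Sb (μ+2) x := by
    rw [Summable.tsum_eq_zero_add hsumd]
    simp only [Nat.cast_zero, zero_mul, zero_div, zero_add]
    unfold Sb
    rw [← tsum_mul_left]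
    apply tsum_congr
    intro k
    have hgam := gamma_pos hμ2 k
    have hfac : (0:ℝ) < (Nat.factorial k : ℝ) := by positivity
    have harg : μ + ((k+1:ℕ):ℝ) + 2 = (μ + 2) + (k:ℝ) + 1 := by push_cast; ring
    simp only [Nat.factorial_succ, harg]
    push_cast
    field_simp
    ring
  linarith [hsub.trans hshift]

lemma besselI_eq {μ t : ℝ} (ht : 0 < t) :
    besselI μ t = (t/2) ^ μ * Sb μ (t^2/4) := by
  unfold besselI Sb
  rw [← tsum_mul_left]
  apply tsum_congr
  intro k
  have h2 : (0:ℝ) < t/2 := by linarith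
  rw [Real.rpow_add h2, mul_div_assoc]
  congr 2
  rw [show (2:ℝ) * (k:ℝ) = ((2*k : ℕ):ℝ) by push_cast; ring, Real.rpow_natCast, pow_mul]
  congr 1
  ring

lemma besselI_pos {μ t : ℝ} (hμ : -1 < μ) (ht : 0 < t) : 0 < besselI μ t := by
  rw [besselI_eq ht]
  have h2 : (0:ℝ) < t/2 := by linarith
  exact mul_pos (Real.rpow_pos_of_pos h2 μ) (Sb_pos hμ (by positivity))

lemma hasDerivAt_besselI {μ t : ℝ} (hμ : -1 < μ) (ht : 0 < t) :
    HasDerivAt (besselI μ) (besselI (μ+1) t + μ/t * besselI μ t) t := by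
  have h2 : (0:ℝ) < t/2 := by linarith
  have hA : HasDerivAt (fun y : ℝ => (y/2) ^ μ) (μ * (t/2) ^ (μ-1) * (1/2)) t := by
    have h := ((hasDerivAt_id t).div_const 2).rpow_const (p := μ) (Or.inl h2.ne')
    simp only [id] at h
    exact h.congr_deriv (by ring)
  have hB : HasDerivAt (fun y : ℝ => Sb μ (y^2/4)) (Sb (μ+1) (t^2/4) * (t/2)) t := by
    have hin : HasDerivAt (fun y : ℝ => y^2/4) (t/2) t := by
      have := (hasDerivAt_pow 2 t).div_const 4
      simpa using this.congr_deriv (by ring)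
    exact (hasDerivAt_Sb hμ (t^2/4)).comp t hin
  have hN : HasDerivAt (fun y : ℝ => (y/2) ^ μ * Sb μ (y^2/4))
      (μ * (t/2) ^ (μ-1) * (1/2) * Sb μ (t^2/4) + (t/2) ^ μ * (Sb (μ+1) (t^2/4) * (t/2))) t :=
    hA.mul hB
  have heq : besselI μ =ᶠ[nhds t] fun y => (y/2) ^ μ * Sb μ (y^2/4) := by
    filter_upwards [Ioi_mem_nhds ht] with y hy
    exact besselI_eq hy
  have hval : μ * (t/2) ^ (μ-1) * (1/2) * Sb μ (t^2/4) + (t/2) ^ μ * (Sb (μ+1) (t^2/4) * (t/2))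
      = besselI (μ+1) t + μ/t * besselI μ t := by
    rw [besselI_eq (μ := μ+1) ht, besselI_eq (μ := μ) ht]
    have e1 : (t/2 : ℝ) ^ (μ+1) = (t/2) ^ μ * (t/2) := by
      rw [Real.rpow_add h2, Real.rpow_one]
    have e2 : (t/2 : ℝ) ^ μ = (t/2) ^ (μ-1) * (t/2) := by
      rw [← Real.rpow_add_one h2.ne' (μ-1)]
      norm_num
    rw [e1, e2]
    field_simp
    ring
  exact (hN.congr_of_eventuallyEq heq).congr_deriv hval

lemma besselI_rec {μ t : ℝ} (hμ : -1 < μ) (ht : 0 < t) :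
    besselI μ t = besselI (μ+2) t + (2*(μ+1)/t) * besselI (μ+1) t := by
  have h2 : (0:ℝ) < t/2 := by linarith
  rw [besselI_eq ht, besselI_eq ht, besselI_eq ht, Sb_rec hμ (t^2/4)]
  have e1 : (t/2 : ℝ) ^ (μ+1) = (t/2) ^ μ * (t/2) := by
    rw [Real.rpow_add h2, Real.rpow_one]
  have e2 : (t/2 : ℝ) ^ (μ+2) = (t/2) ^ μ * (t/2) * (t/2) := by
    rw [show μ+2 = (μ+1)+1 by ring, Real.rpow_add h2, Real.rpow_one, e1]
  rw [e1, e2]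
  field_simp
  ring

lemma hasDerivAt_besselI_num {ν t : ℝ} (hν : 0 < ν) (ht : 0 < t) :
    HasDerivAt (besselI ν) (besselI (ν-1) t - ν/t * besselI ν t) t := by
  have h := hasDerivAt_besselI (μ := ν) (by linarith) ht
  have hrec := besselI_rec (μ := ν-1) (by linarith) ht
  rw [show ν-1+2 = ν+1 by ring, show ν-1+1 = ν by ring] at hrec
  refine h.congr_deriv ?_
  have ht' : t ≠ 0 := ht.ne'
  field_simp at hrec ⊢
  linarith

lemma hasDerivAt_besselI_den {ν t : ℝ} (hν : 0 < ν) (ht : 0 < t) :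
    HasDerivAt (besselI (ν-1)) (besselI ν t + (ν-1)/t * besselI (ν-1) t) t := by
  have h := hasDerivAt_besselI (μ := ν-1) (by linarith) ht
  rwa [show ν-1+1 = ν by ring] at h

lemma hasDerivAt_besselRatio {ν t : ℝ} (hν : 0 < ν) (ht : 0 < t) :
    HasDerivAt (besselRatio ν)
      (1 - (2*ν-1)/t * besselRatio ν t - (besselRatio ν t)^2) t := by
  have hB := besselI_pos (μ := ν-1) (by linarith) ht
  have h := (hasDerivAt_besselI_num hν ht).div (hasDerivAt_besselI_den hν ht) hB.ne'
  have h2 := h.congr_deriv (g' := 1 - (2*ν-1)/t * besselRatio ν t - (besselRatio ν t)^2)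
    (by unfold besselRatio; field_simp; ring)
  exact h2

lemma hasDerivAt_Lf {ν a t : ℝ} (hν : 0 < ν) (ha : 0 < a) (ht : 0 < t) :
    HasDerivAt (fun t : ℝ => Real.log
        (t ^ ν / a ^ (ν - 1) * Real.exp (-(t ^ 2 + a ^ 2) / 2) * besselI (ν - 1) (a * t)))
      ((2*ν-1)/t - t + a * besselRatio ν (a*t)) t := by
  have hμ : -1 < ν - 1 := by linarith
  set G : ℝ → ℝ := fun y =>
    ν * Real.log y - (ν-1) * Real.log a - (y^2+a^2)/2 + Real.log (besselI (ν-1) (a*y)) with hG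
  have heq : ∀ y : ℝ, 0 < y → Real.log
      (y ^ ν / a ^ (ν - 1) * Real.exp (-(y ^ 2 + a ^ 2) / 2) * besselI (ν - 1) (a * y)) = G y := by
    intro y hy
    have h1 : (0:ℝ) < y ^ ν := Real.rpow_pos_of_pos hy ν
    have h2 : (0:ℝ) < a ^ (ν-1) := Real.rpow_pos_of_pos ha _
    have h3 : (0:ℝ) < besselI (ν-1) (a*y) := besselI_pos hμ (by positivity)
    rw [Real.log_mul (by positivity) h3.ne', Real.log_mul (by positivity) (Real.exp_ne_zero _),
        Real.log_div h1.ne' h2.ne', Real.log_rpow hy, Real.log_rpow ha, Real.log_exp, hG]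
    ring
  have hat : 0 < a * t := by positivity
  have hB : 0 < besselI (ν-1) (a*t) := besselI_pos hμ hat
  have d1 : HasDerivAt (fun y : ℝ => ν * Real.log y) (ν / t) t := by
    have h := (Real.hasDerivAt_log ht.ne').const_mul ν
    exact h.congr_deriv (by rw [div_eq_mul_inv])
  have d2 : HasDerivAt (fun y : ℝ => (y^2+a^2)/2) t t := by
    have h := ((hasDerivAt_pow 2 t).add_const (a^2)).div_const 2
    exact h.congr_deriv (by norm_num)
  have hin : HasDerivAt (fun y : ℝ => a*y) a t := by
    simpa using (hasDerivAt_id t).const_mul a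
  have d3 : HasDerivAt (fun y : ℝ => besselI (ν-1) (a*y))
      ((besselI ν (a*t) + (ν-1)/(a*t) * besselI (ν-1) (a*t)) * a) t :=
    (hasDerivAt_besselI_den hν hat).comp t hin
  have d4 : HasDerivAt (fun y : ℝ => Real.log (besselI (ν-1) (a*y)))
      (((besselI ν (a*t) + (ν-1)/(a*t) * besselI (ν-1) (a*t)) * a) / besselI (ν-1) (a*t)) t :=
    d3.log hB.ne'
  have hd : HasDerivAt G ((2*ν-1)/t - t + a * besselRatio ν (a*t)) t := by
    have h := ((d1.sub_const ((ν-1) * Real.log a)).sub d2).add d4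
    refine h.congr_deriv ?_
    unfold besselRatio
    generalize besselI (ν-1) (a*t) = B at hB ⊢
    field_simp [hB.ne']
    ring
  exact hd.congr_of_eventuallyEq
    (by filter_upwards [Ioi_mem_nhds ht] with y hy; exact heq y hy)

lemma hasDerivAt_L1 {ν a t : ℝ} (hν : 0 < ν) (ha : 0 < a) (ht : 0 < t) :
    HasDerivAt (fun t : ℝ => (2*ν-1)/t - t + a * besselRatio ν (a*t))
      (a^2 * (1 - (2*ν-1)/(a*t)^2 - (2*ν-1)/(a*t) * besselRatio ν (a*t)
        - (besselRatio ν (a*t))^2) - 1) t := by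
  have hat : 0 < a * t := by positivity
  have e1 : HasDerivAt (fun y : ℝ => (2*ν-1)/y) (-(2*ν-1)/t^2) t := by
    have h := (hasDerivAt_inv ht.ne').const_mul (2*ν-1)
    have hfun : (fun y : ℝ => (2*ν-1)/y) = fun y : ℝ => (2*ν-1)*y⁻¹ := by
      funext y; rw [div_eq_mul_inv]
    rw [hfun]
    refine h.congr_deriv ?_
    field_simp
  have hin : HasDerivAt (fun y : ℝ => a*y) a t := by
    simpa using (hasDerivAt_id t).const_mul a
  have e3 : HasDerivAt (fun y : ℝ => a * besselRatio ν (a*y))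
      (a * ((1 - (2*ν-1)/(a*t) * besselRatio ν (a*t) - (besselRatio ν (a*t))^2) * a)) t :=
    ((hasDerivAt_besselRatio hν hat).comp t hin).const_mul a
  have h := (e1.sub (hasDerivAt_id t)).add e3
  refine h.congr_deriv ?_
  field_simp
  ring

end BesselProofAux

open BesselProofAux in
/-- with `h_ν(t) = 1 - (2ν-1)/t² - ((2ν-1)/t) r_ν(t) - r_ν(t)²`, the
noncentral chi density `f_a` is log-concave on `(0, ∞)` for every `a > 0` iff
`h_ν(t) ≤ 0` for all `t > 0`. -/
theorem logConcave_forall_a_iff_h_nonpos (ν : ℝ) (hν : 0 < ν) :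
    (∀ a : ℝ, 0 < a →
      ConcaveOn ℝ (Set.Ioi 0) (fun t : ℝ => Real.log
        (t ^ ν / a ^ (ν - 1) * Real.exp (-(t ^ 2 + a ^ 2) / 2) * besselI (ν - 1) (a * t)))) ↔
    (∀ t : ℝ, 0 < t →
      1 - (2 * ν - 1) / t ^ 2 - (2 * ν - 1) / t * besselRatio ν t - (besselRatio ν t) ^ 2 ≤ 0) := by
  constructor
  · intro hcon s hs
    set H : ℝ := 1 - (2 * ν - 1) / s ^ 2 - (2 * ν - 1) / s * besselRatio ν s
      - (besselRatio ν s) ^ 2 with hH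
    have key : ∀ a : ℝ, 0 < a → a ^ 2 * H ≤ 1 := by
      intro a ha
      set L1 : ℝ → ℝ := fun t : ℝ => (2*ν-1)/t - t + a * besselRatio ν (a*t) with hL1
      have hts : 0 < s / a := by positivity
      have hanti : AntitoneOn (deriv (fun t : ℝ => Real.log
          (t ^ ν / a ^ (ν - 1) * Real.exp (-(t ^ 2 + a ^ 2) / 2) * besselI (ν - 1) (a * t))))
          (Set.Ioi 0) :=
        (hcon a ha).antitoneOn_deriv (fun x hx => (hasDerivAt_Lf hν ha hx).differentiableAt)
      have hderiv_eq : ∀ x ∈ Set.Ioi (0:ℝ), deriv (fun t : ℝ => Real.log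
          (t ^ ν / a ^ (ν - 1) * Real.exp (-(t ^ 2 + a ^ 2) / 2) * besselI (ν - 1) (a * t))) x
          = L1 x := fun x hx => (hasDerivAt_Lf hν ha hx).deriv
      have hantiL1 : AntitoneOn L1 (Set.Ioi 0) := by
        intro x hx y hy hxy
        have := hanti hx hy hxy
        rwa [hderiv_eq x hx, hderiv_eq y hy] at this
      set L2s : ℝ := a^2 * (1 - (2*ν-1)/(a*(s/a))^2 - (2*ν-1)/(a*(s/a)) * besselRatio ν (a*(s/a))
        - (besselRatio ν (a*(s/a)))^2) - 1 with hL2s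
      have hdL1 : HasDerivAt L1 L2s (s/a) := hasDerivAt_L1 hν ha hts
      have hslope : Tendsto (slope L1 (s/a)) (𝓝[>] (s/a)) (𝓝 L2s) :=
        (hasDerivAt_iff_tendsto_slope.mp hdL1).mono_left
          (nhdsWithin_mono _ (fun x hx => ne_of_gt hx))
      have hL2 : L2s ≤ 0 := by
        refine le_of_tendsto hslope ?_
        filter_upwards [self_mem_nhdsWithin] with x hx
        have hx0 : (0:ℝ) < x := lt_trans hts hx
        have hx' : s/a < x := hx
        have hle : L1 x ≤ L1 (s/a) := hantiL1 hts hx0 (le_of_lt hx')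
        rw [slope_def_field]
        exact div_nonpos_iff.mpr (Or.inr ⟨by linarith, by linarith⟩)
      have has : a * (s/a) = s := by field_simp
      rw [hL2s, has] at hL2
      rw [hH]
      linarith [hL2]
    by_contra hpos
    push_neg at hpos
    set a : ℝ := Real.sqrt (2 / H) with haa
    have hH2 : (0:ℝ) < 2 / H := div_pos (by norm_num) hpos
    have ha : 0 < a := Real.sqrt_pos.mpr hH2
    have ha2 : a ^ 2 = 2 / H := Real.sq_sqrt hH2.le
    have := key a ha
    rw [ha2] at this
    have : (2:ℝ) ≤ 1 := by
      have h2 : 2 / H * H = 2 := by field_simp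
      nlinarith
    linarith
  · intro hh a ha
    apply concaveOn_of_hasDerivWithinAt2_nonpos (convex_Ioi 0)
      (f' := fun t : ℝ => (2*ν-1)/t - t + a * besselRatio ν (a*t))
      (f'' := fun t : ℝ => a^2 * (1 - (2*ν-1)/(a*t)^2 - (2*ν-1)/(a*t) * besselRatio ν (a*t)
        - (besselRatio ν (a*t))^2) - 1)
    · exact fun x hx => (hasDerivAt_Lf hν ha hx).continuousAt.continuousWithinAt
    · intro x hx
      rw [interior_Ioi] at hx
      exact (hasDerivAt_Lf hν ha hx).hasDerivWithinAt
    · intro x hx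
      rw [interior_Ioi] at hx
      exact (hasDerivAt_L1 hν ha hx).hasDerivWithinAt
    · intro x hx
      rw [interior_Ioi] at hx
      have hx0 : (0:ℝ) < x := hx
      have hax : 0 < a * x := by positivity
      have := hh (a*x) hax
      nlinarith [sq_nonneg a]
end
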